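/- arXiv:1510.00303 — 6 statements merged into one kernel-verified Lean document; each statement's English description precedes it below -/
import Mathlib

section
/- Let p > q > 0 and for each c ∈ ℝ let R(z,c) := z² − cz − q + p·∫₀^∞∫_ℝ K(s,w)·e^{−z(cs+w)} dw ds, defined for z in the maximal interval [0, δ(c)) of convergence of the integral, with δ(c) ∈ (0,+∞]. Then there exists c# ∈ ℝ such that: (i) for every c > c#, the function z ↦ R(z,c) has at least one zero in (0, δ(c)), has at most two zeros in (0, δ(c)), has no zero at any z < 0 at which the defining integral converges, and every zero λ in (0, δ(c)) satisfies λ < μ_q(c) := (c + √(c² + 4q))/2 (the positive root of z² − cz − q = 0); (ii) if lim_{z↑δ(c#)} R(z,c#) ≠ 0, then z ↦ R(z,c#) has exactly one zero λ₁ in (0, δ(c#)) and R(z,c#) > 0 for every z ∈ [0, δ(c#)) with z ≠ λ₁. -/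
open MeasureTheory Filter Set
open scoped ENNReal

noncomputable section

/-- The characteristic-type function `R(z,c) = z² - cz - q + p ∫₀^∞∫_ℝ K(s,w) e^{-z(cs+w)}`. -/
def Rfun (K : ℝ → ℝ → ℝ) (p q : ℝ) (z c : ℝ) : ℝ :=
  z ^ 2 - c * z - q +
    p * ∫ s in Set.Ioi (0:ℝ), ∫ w : ℝ, K s w * Real.exp (-z * (c * s + w))

/-- The filter describing `z ↑ δ(c)`: `atTop` if `δ(c) = ∞`, otherwise the left
  neighbourhood filter of `δ(c)`. -/
def leftApproach (d : ℝ≥0∞) : Filter ℝ :=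
  if d = ⊤ then Filter.atTop else nhdsWithin d.toReal (Set.Iio d.toReal)

/-!
Let `ν` be the probability measure with density `K` on the half-plane `s > 0`. Then the integral
in `R(z, c)` is the moment generating function of `-(c s + w)` under `ν`, so `R(·, c)` is strictly
convex on its (convex) domain, `R(0, c) = p - q > 0`, and `R(z, ·)` is strictly decreasing for
`z > 0`. Take for `c#` the infimum of the speeds `c` at which `R(·, c)` is nonpositive somewhere
on `(0, δ(c))`. For `c > c#` the function `R(·, c)` takes a negative value, so it has a zero by
the intermediate value theorem, at most two by strict convexity, none below `0` since
`R(0, c) > 0`, and its zeros satisfy `z² - c z - q < 0` since the integral is positive.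

At `c#`, `R(·, c#) ≥ 0`: the domain of integrability is convex in the `(z c, z)`-plane, so a
point `z < δ(c#)` stays in the domain for slightly smaller speeds, where a negative value
would persist by continuity. Fatou's lemma along negative points at speeds `c ↓ c#` gives
`λ₁ > 0` with `R(λ₁, c#) ≤ 0` in the closure of the domain; hence `R(λ₁, c#) = 0`, and
`λ₁ < δ(c#)` unless `R(z, c#) → 0` as `z ↑ δ(c#)`. Strict convexity makes `λ₁` the only zero.
-/

open scoped Topology
open ProbabilityTheory Real

lemma Real.exp_convexComb_le (U V : ℝ) {a b : ℝ} (ha : 0 ≤ a) (hb : 0 ≤ b) (hab : a + b = 1) :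
    exp (a * U + b * V) ≤ a * exp U + b * exp V :=
  convexOn_exp.2 (mem_univ U) (mem_univ V) ha hb hab

namespace ProbabilityTheory

variable {Ω : Type*} {m : MeasurableSpace Ω} {μ : Measure Ω}

lemma integrable_exp_convexComb {U V : Ω → ℝ} (hU : AEMeasurable U μ) (hV : AEMeasurable V μ)
    (hU' : Integrable (fun ω ↦ exp (U ω)) μ) (hV' : Integrable (fun ω ↦ exp (V ω)) μ)
    {a b : ℝ} (ha : 0 ≤ a) (hb : 0 ≤ b) (hab : a + b = 1) :
    Integrable (fun ω ↦ exp (a * U ω + b * V ω)) μ := by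
  refine ((hU'.const_mul a).add (hV'.const_mul b)).mono'
    ((hU.const_mul a).add (hV.const_mul b)).exp.aestronglyMeasurable (ae_of_all _ fun ω ↦ ?_)
  rw [norm_of_nonneg (exp_pos _).le]
  exact exp_convexComb_le _ _ ha hb hab

lemma integral_exp_convexComb_le {U V : Ω → ℝ} (hU : AEMeasurable U μ) (hV : AEMeasurable V μ)
    (hU' : Integrable (fun ω ↦ exp (U ω)) μ) (hV' : Integrable (fun ω ↦ exp (V ω)) μ)
    {a b : ℝ} (ha : 0 ≤ a) (hb : 0 ≤ b) (hab : a + b = 1) :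
    ∫ ω, exp (a * U ω + b * V ω) ∂μ ≤ a * ∫ ω, exp (U ω) ∂μ + b * ∫ ω, exp (V ω) ∂μ := by
  rw [← integral_const_mul, ← integral_const_mul, ← integral_add (hU'.const_mul a)
    (hV'.const_mul b)]
  exact integral_mono (integrable_exp_convexComb hU hV hU' hV' ha hb hab)
    ((hU'.const_mul a).add (hV'.const_mul b)) fun ω ↦ exp_convexComb_le _ _ ha hb hab

lemma convexOn_mgf {X : Ω → ℝ} (hX : AEMeasurable X μ) :
    ConvexOn ℝ (integrableExpSet X μ) (mgf X μ) := by
  refine ⟨convex_integrableExpSet, fun s hs t ht a b ha hb hab ↦ ?_⟩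
  have hlin : ∀ ω, (a * s + b * t) * X ω = a * (s * X ω) + b * (t * X ω) := fun ω ↦ by ring
  simp only [mgf, smul_eq_mul, hlin]
  exact integral_exp_convexComb_le (hX.const_mul s) (hX.const_mul t) hs ht ha hb hab

/-- Unlike `continuousOn_mgf`, this includes the endpoints of the interval. -/
lemma continuousOn_mgf_Icc {X : Ω → ℝ} (hX : AEMeasurable X μ) {a b : ℝ}
    (ha : a ∈ integrableExpSet X μ) (hb : b ∈ integrableExpSet X μ) :
    ContinuousOn (mgf X μ) (Icc a b) := by
  refine continuousOn_of_dominated (bound := fun ω ↦ exp (a * X ω) + exp (b * X ω))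
    (fun t _ ↦ (hX.const_mul t).exp.aestronglyMeasurable)
    (fun t ht ↦ ae_of_all _ fun ω ↦ ?_) (Integrable.add ha hb) (ae_of_all _ fun ω ↦ by fun_prop)
  rw [norm_of_nonneg (exp_pos _).le]
  rcases le_total 0 (X ω) with h | h
  · exact (exp_le_exp.2 (mul_le_mul_of_nonneg_right ht.2 h)).trans
      (le_add_of_nonneg_left (exp_pos _).le)
  · exact (exp_le_exp.2 (mul_le_mul_of_nonpos_right ht.1 h)).trans
      (le_add_of_nonneg_right (exp_pos _).le)

end ProbabilityTheory

namespace MeasureTheory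

variable {Ω : Type*} {m : MeasurableSpace Ω} {μ : Measure Ω}

lemma integrable_and_integral_le_of_tendsto {f : ℕ → Ω → ℝ} {g : Ω → ℝ} {β : ℕ → ℝ} {b : ℝ}
    (hf_nonneg : ∀ n, 0 ≤ f n) (hf : ∀ n, Integrable (f n) μ)
    (hfg : ∀ ω, Tendsto (fun n ↦ f n ω) atTop (𝓝 (g ω))) (hβ : Tendsto β atTop (𝓝 b))
    (hle : ∀ n, ∫ ω, f n ω ∂μ ≤ β n) :
    Integrable g μ ∧ ∫ ω, g ω ∂μ ≤ b := by
  have hg_nonneg : 0 ≤ᵐ[μ] g := ae_of_all _ fun ω ↦ ge_of_tendsto' (hfg ω) fun n ↦ hf_nonneg n ω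
  have hb : 0 ≤ b := ge_of_tendsto' hβ fun n ↦ (integral_nonneg (hf_nonneg n)).trans (hle n)
  have hgm : AEStronglyMeasurable g μ :=
    aestronglyMeasurable_of_tendsto_ae atTop (fun n ↦ (hf n).1) (ae_of_all _ hfg)
  have hlintegral : ∫⁻ ω, ENNReal.ofReal (g ω) ∂μ ≤ ENNReal.ofReal b := calc
    ∫⁻ ω, ENNReal.ofReal (g ω) ∂μ = ∫⁻ ω, liminf (fun n ↦ ENNReal.ofReal (f n ω)) atTop ∂μ :=
      lintegral_congr fun ω ↦ (ENNReal.tendsto_ofReal (hfg ω)).liminf_eq.symm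
    _ ≤ liminf (fun n ↦ ∫⁻ ω, ENNReal.ofReal (f n ω) ∂μ) atTop :=
      lintegral_liminf_le' fun n ↦ (hf n).aemeasurable.ennreal_ofReal
    _ ≤ liminf (fun n ↦ ENNReal.ofReal (β n)) atTop := by
      refine liminf_le_liminf (Eventually.of_forall fun n ↦ ?_)
      rw [← ofReal_integral_eq_lintegral_ofReal (hf n) (ae_of_all _ (hf_nonneg n))]
      exact ENNReal.ofReal_le_ofReal (hle n)
    _ = ENNReal.ofReal b := (ENNReal.tendsto_ofReal hβ).liminf_eq
  refine ⟨⟨hgm, (hasFiniteIntegral_iff_ofReal hg_nonneg).2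
    (hlintegral.trans_lt ENNReal.ofReal_lt_top)⟩, ?_⟩
  rw [integral_eq_lintegral_of_nonneg_ae hg_nonneg hgm]
  exact ENNReal.toReal_le_of_le_ofReal hb hlintegral

end MeasureTheory

namespace StrictConvexOn

variable {s : Set ℝ} {f : ℝ → ℝ} {x y z : ℝ}

lemma neg_of_nonpos_of_nonpos (hf : StrictConvexOn ℝ s f) (hx : x ∈ s) (hz : z ∈ s)
    (hxy : x < y) (hyz : y < z) (hfx : f x ≤ 0) (hfz : f z ≤ 0) : f y < 0 :=
  (hf.lt_on_openSegment hx hz (hxy.trans hyz).ne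
    (by rw [openSegment_eq_Ioo (hxy.trans hyz)]; exact ⟨hxy, hyz⟩)).trans_le (max_le hfx hfz)

lemma encard_zeros_le_two (hf : StrictConvexOn ℝ s f) : {x ∈ s | f x = 0}.encard ≤ 2 := by
  rcases Set.subsingleton_or_nontrivial {x ∈ s | f x = 0} with h | h
  · exact (encard_le_one_iff_subsingleton.2 h).trans (by norm_num)
  obtain ⟨x, ⟨hx, hfx⟩, y, ⟨hy, hfy⟩, hxy⟩ := h.exists_lt
  refine (encard_le_encard fun z hz ↦ ?_).trans (encard_pair hxy.ne).le
  obtain ⟨hz, hfz⟩ := hz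
  rcases lt_trichotomy z x with hzx | rfl | hxz
  · exact absurd hfx (hf.neg_of_nonpos_of_nonpos hz hy hzx hxy hfz.le hfy.le).ne
  · exact Or.inl rfl
  rcases lt_trichotomy z y with hzy | rfl | hyz
  · exact absurd hfz (hf.neg_of_nonpos_of_nonpos hx hy hxz hzy hfx.le hfy.le).ne
  · exact Or.inr rfl
  · exact absurd hfy (hf.neg_of_nonpos_of_nonpos hx hz hxy hyz hfx.le hfz.le).ne

lemma pos_of_ne_of_eq_zero (hf : StrictConvexOn ℝ s f) (hnonneg : ∀ y ∈ s, 0 ≤ f y)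
    (hx : x ∈ s) (hfx : f x = 0) (hy : y ∈ s) (hyx : y ≠ x) : 0 < f y := by
  refine (hnonneg y hy).lt_of_ne fun hfy ↦ ?_
  have hmid : (x + y) / 2 ∈ s := by
    rw [show (x + y) / 2 = (1 / 2 : ℝ) • x + (1 / 2 : ℝ) • y by simp only [smul_eq_mul]; ring]
    exact hf.1 hx hy (by norm_num) (by norm_num) (by norm_num)
  rcases hyx.lt_or_gt with h | h
  · exact (hnonneg _ hmid).not_gt
      (hf.neg_of_nonpos_of_nonpos hy hx (by linarith) (by linarith) hfy.ge hfx.le)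
  · exact (hnonneg _ hmid).not_gt
      (hf.neg_of_nonpos_of_nonpos hx hy (by linarith) (by linarith) hfx.le hfy.ge)

end StrictConvexOn

/-- `mgf (waveVar c) ν z` is the paper's `∫₀^∞∫_ℝ K(s,w) e^{-z(cs+w)} dw ds` when `ν` has
density `K` (see `Rfun_eq_waveCharFun`). -/
def waveVar (c : ℝ) (x : ℝ × ℝ) : ℝ := -(c * x.1 + x.2)

def waveCharFun (ν : Measure (ℝ × ℝ)) (p q c z : ℝ) : ℝ :=
  z ^ 2 - c * z - q + p * mgf (waveVar c) ν z

section CharFun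

variable {ν : Measure (ℝ × ℝ)} {p q c c' z : ℝ}

lemma measurable_waveVar (c : ℝ) : Measurable (waveVar c) := by
  unfold waveVar; fun_prop

lemma zero_mem_integrableExpSet [IsFiniteMeasure ν] : (0 : ℝ) ∈ integrableExpSet (waveVar c) ν := by
  simp [integrableExpSet]

lemma norm_exp_mul_waveVar_le {x : ℝ × ℝ} (hx : 0 ≤ x.1) (hz : 0 ≤ z) (hc : c ≤ c') :
    ‖exp (z * waveVar c' x)‖ ≤ exp (z * waveVar c x) := by
  rw [norm_of_nonneg (exp_pos _).le, exp_le_exp]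
  exact mul_le_mul_of_nonneg_left (by unfold waveVar; nlinarith) hz

lemma mem_integrableExpSet_waveVar_of_le (hν : ∀ᵐ x ∂ν, 0 ≤ x.1) (hz : 0 ≤ z) (hc : c ≤ c')
    (h : z ∈ integrableExpSet (waveVar c) ν) : z ∈ integrableExpSet (waveVar c') ν :=
  Integrable.mono' h ((measurable_waveVar c').const_mul z).exp.aestronglyMeasurable
    (by filter_upwards [hν] with x hx using norm_exp_mul_waveVar_le hx hz hc)

lemma mgf_waveVar_le (hν : ∀ᵐ x ∂ν, 0 ≤ x.1) (hz : 0 ≤ z) (hc : c ≤ c')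
    (h : z ∈ integrableExpSet (waveVar c) ν) : mgf (waveVar c') ν z ≤ mgf (waveVar c) ν z :=
  mgf_mono_of_nonneg (by filter_upwards [hν] with x hx using by unfold waveVar; nlinarith) hz h

lemma continuousOn_waveCharFun_speed (hν : ∀ᵐ x ∂ν, 0 ≤ x.1) (hz : 0 ≤ z)
    (h : z ∈ integrableExpSet (waveVar c) ν) :
    ContinuousOn (fun c' ↦ waveCharFun ν p q c' z) (Ici c) := by
  have hmgf : ContinuousOn (fun c' ↦ mgf (waveVar c') ν z) (Ici c) :=
    continuousOn_of_dominated (bound := fun x ↦ exp (z * waveVar c x))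
      (fun c' _ ↦ ((measurable_waveVar c').const_mul z).exp.aestronglyMeasurable)
      (fun _ hc' ↦ by filter_upwards [hν] with x hx using norm_exp_mul_waveVar_le hx hz hc') h
      (ae_of_all _ fun x ↦ by unfold waveVar; fun_prop)
  exact (Continuous.continuousOn (by fun_prop)).add (continuousOn_const.mul hmgf)

lemma waveCharFun_zero [IsProbabilityMeasure ν] : waveCharFun ν p q c 0 = p - q := by
  rw [waveCharFun, mgf_zero]
  ring

lemma strictConvexOn_waveCharFun (hp : 0 ≤ p) :
    StrictConvexOn ℝ (integrableExpSet (waveVar c) ν) (waveCharFun ν p q c) := by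
  refine ⟨convex_integrableExpSet, fun x hx y hy hxy a b ha hb hab ↦ ?_⟩
  have hsq :=
    (Even.strictConvexOn_pow even_two two_ne_zero).2 (mem_univ x) (mem_univ y) hxy ha hb hab
  have hmgf := (convexOn_mgf (measurable_waveVar c).aemeasurable).2 hx hy ha.le hb.le hab
  simp only [smul_eq_mul] at hsq hmgf ⊢
  have hlin : a * (c * x + q) + b * (c * y + q) = c * (a * x + b * y) + q := by
    linear_combination q * hab
  unfold waveCharFun
  nlinarith [mul_le_mul_of_nonneg_left hmgf hp]

lemma continuousOn_waveCharFun [IsFiniteMeasure ν] {b : ℝ}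
    (hb : b ∈ integrableExpSet (waveVar c) ν) :
    ContinuousOn (waveCharFun ν p q c) (Icc 0 b) :=
  (Continuous.continuousOn (by fun_prop)).add (continuousOn_const.mul
    (continuousOn_mgf_Icc (measurable_waveVar c).aemeasurable zero_mem_integrableExpSet hb))

lemma tendsto_waveCharFun_nhdsLT [IsFiniteMeasure ν] {b : ℝ} (hb0 : 0 < b)
    (hb : b ∈ integrableExpSet (waveVar c) ν) :
    Tendsto (waveCharFun ν p q c) (𝓝[<] b) (𝓝 (waveCharFun ν p q c b)) :=
  (continuousOn_waveCharFun hb b ⟨hb0.le, le_rfl⟩).mono_of_mem_nhdsWithin (Icc_mem_nhdsLT hb0)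

lemma waveCharFun_lt_waveCharFun (hν : ∀ᵐ x ∂ν, 0 ≤ x.1) (hp : 0 ≤ p) (hz : 0 < z) (hc : c < c')
    (h : z ∈ integrableExpSet (waveVar c) ν) : waveCharFun ν p q c' z < waveCharFun ν p q c z := by
  have := mul_le_mul_of_nonneg_left (mgf_waveVar_le hν hz.le hc.le h) hp
  unfold waveCharFun
  nlinarith

lemma sq_sub_mul_sub_neg_of_waveCharFun_nonpos [IsProbabilityMeasure ν] (hp : 0 < p)
    (h : z ∈ integrableExpSet (waveVar c) ν) (hR : waveCharFun ν p q c z ≤ 0) :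
    z ^ 2 - c * z - q < 0 := by
  have := mul_pos hp (mgf_pos h)
  unfold waveCharFun at hR
  linarith

lemma lt_of_sq_sub_mul_sub_neg (h : z ^ 2 - c * z - q < 0) :
    z < (c + √(c ^ 2 + 4 * q)) / 2 := by
  have := Real.lt_sqrt_of_sq_lt (show (2 * z - c) ^ 2 < c ^ 2 + 4 * q by nlinarith)
  linarith

lemma waveCharFun_nonpos_of_tendsto [IsProbabilityMeasure ν] (hp : 0 < p) {cn zn : ℕ → ℝ}
    (hc : Tendsto cn atTop (𝓝 c)) (hz : Tendsto zn atTop (𝓝 z))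
    (hI : ∀ n, zn n ∈ integrableExpSet (waveVar (cn n)) ν)
    (hR : ∀ n, waveCharFun ν p q (cn n) (zn n) ≤ 0) :
    z ∈ integrableExpSet (waveVar c) ν ∧ waveCharFun ν p q c z ≤ 0 := by
  obtain ⟨hint, hle⟩ := integrable_and_integral_le_of_tendsto (μ := ν)
    (f := fun n x ↦ exp (zn n * waveVar (cn n) x)) (g := fun x ↦ exp (z * waveVar c x))
    (β := fun n ↦ (q + cn n * zn n - zn n ^ 2) / p) (fun n x ↦ (exp_pos _).le) hI
    (fun x ↦ (hz.mul ((hc.mul_const x.1).add_const x.2).neg).rexp)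
    (((tendsto_const_nhds.add (hc.mul hz)).sub (hz.pow 2)).div_const p)
    (fun n ↦ by rw [le_div_iff₀ hp]; have := hR n; unfold waveCharFun mgf at this; linarith)
  refine ⟨hint, ?_⟩
  rw [le_div_iff₀ hp] at hle
  unfold waveCharFun mgf
  linarith

/-- The domain of integrability is convex in the `(z c, z)`-plane; combining `(t c₁, t)` with
`(z' c, z')` gives a point on a ray of slope `c' < c` beyond `z`. -/
lemma exists_lt_mem_integrableExpSet_waveVar [IsFiniteMeasure ν] {c₁ t z' : ℝ} (hc₁ : c₁ < c)
    (ht : 0 < t) (ht' : t ∈ integrableExpSet (waveVar c₁) ν) (hz : 0 ≤ z) (hzz' : z < z')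
    (hz' : z' ∈ integrableExpSet (waveVar c) ν) :
    ∃ c' < c, z ∈ integrableExpSet (waveVar c') ν := by
  set a := (z' - z) / (z' + t)
  have ha : a * (z' + t) = z' - z := div_mul_cancel₀ _ (by linarith)
  have ha0 : 0 < a := div_pos (by linarith) (by linarith)
  set τ := a * t + (1 - a) * z'
  have hτ : z ≤ τ := by nlinarith
  have hτ0 : 0 < τ := by nlinarith
  set c' := (a * (t * c₁) + (1 - a) * (z' * c)) / τ
  have hlin : ∀ x, τ * waveVar c' x = a * (t * waveVar c₁ x) + (1 - a) * (z' * waveVar c x) := by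
    intro x
    simp only [waveVar, c']
    field_simp
    ring
  have hτI : τ ∈ integrableExpSet (waveVar c') ν := by
    change Integrable (fun x ↦ exp (τ * waveVar c' x)) ν
    simp_rw [hlin]
    exact integrable_exp_convexComb ((measurable_waveVar c₁).const_mul t).aemeasurable
      ((measurable_waveVar c).const_mul z').aemeasurable ht' hz' ha0.le (by nlinarith) (by ring)
  refine ⟨c', (div_lt_iff₀ hτ0).2 (by nlinarith [mul_pos ha0 ht]), ?_⟩
  exact integrable_exp_mul_of_le_of_le zero_mem_integrableExpSet hτI hz hτ

end CharFun

def admissibleSpeeds (ν : Measure (ℝ × ℝ)) (p q : ℝ) : Set ℝ :=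
  {c | ∃ z, 0 < z ∧ z ∈ integrableExpSet (waveVar c) ν ∧ waveCharFun ν p q c z ≤ 0}

def criticalSpeed (ν : Measure (ℝ × ℝ)) (p q : ℝ) : ℝ := sInf (admissibleSpeeds ν p q)

section CriticalSpeed

variable {ν : Measure (ℝ × ℝ)} {p q c z : ℝ}

lemma admissibleSpeeds_nonempty (hν : ∀ᵐ x ∂ν, 0 ≤ x.1) (hp : 0 ≤ p)
    (hpos : ∀ c, ∃ t, 0 < t ∧ t ∈ integrableExpSet (waveVar c) ν) :
    (admissibleSpeeds ν p q).Nonempty := by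
  obtain ⟨z, hz, hzI⟩ := hpos 0
  set c := max 0 ((z ^ 2 - q + p * mgf (waveVar 0) ν z) / z)
  have hc : 0 ≤ c := le_max_left _ _
  refine ⟨c, z, hz, mem_integrableExpSet_waveVar_of_le hν hz.le hc hzI, ?_⟩
  have h₁ := (div_le_iff₀ hz).1 (le_max_right 0 ((z ^ 2 - q + p * mgf (waveVar 0) ν z) / z))
  have h₂ := mul_le_mul_of_nonneg_left (mgf_waveVar_le hν hz.le hc hzI) hp
  unfold waveCharFun
  linarith

lemma bddBelow_admissibleSpeeds [IsProbabilityMeasure ν] (hν : ∀ᵐ x ∂ν, 0 ≤ x.1) (hp : 0 ≤ p)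
    (hqp : q < p) (hpos : ∀ c, ∃ t, 0 < t ∧ t ∈ integrableExpSet (waveVar c) ν) :
    BddBelow (admissibleSpeeds ν p q) := by
  obtain ⟨z₀, hz₀, hz₀I⟩ := hpos 0
  have hcont : Tendsto (fun z ↦ p * mgf (waveVar 0) ν z) (𝓝[≥] 0) (𝓝 (p * mgf (waveVar 0) ν 0)) :=
    ((continuousOn_mgf_Icc (measurable_waveVar 0).aemeasurable zero_mem_integrableExpSet hz₀I 0
      ⟨le_rfl, hz₀.le⟩).mono_of_mem_nhdsWithin (Icc_mem_nhdsGE hz₀)).const_mul p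
  rw [mgf_zero, mul_one] at hcont
  obtain ⟨η, (hη : 0 < η), hηq⟩ :=
    mem_nhdsGE_iff_exists_Ico_subset.1 (hcont.eventually (lt_mem_nhds hqp))
  refine ⟨-(|q| / η), fun c ⟨z, hz, hzI, hR⟩ ↦ ?_⟩
  by_contra! hc
  have hqη : 0 ≤ |q| / η := div_nonneg (abs_nonneg q) hη.le
  have hc0 : c ≤ 0 := by linarith
  have hmgf := mul_le_mul_of_nonneg_left (mgf_waveVar_le hν hz.le hc0 hzI) hp
  unfold waveCharFun at hR
  rcases lt_or_ge z η with hzη | hzη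
  · have : q < p * mgf (waveVar 0) ν z := hηq ⟨hz.le, hzη⟩
    nlinarith
  · have : |q| / η * η ≤ -c * z := mul_le_mul (by linarith) hzη hη.le (by linarith)
    rw [div_mul_cancel₀ _ hη.ne'] at this
    nlinarith [le_abs_self q, mul_nonneg hp (mgf_nonneg (X := waveVar c) (μ := ν) (t := z))]

lemma exists_waveCharFun_neg_of_criticalSpeed_lt (hν : ∀ᵐ x ∂ν, 0 ≤ x.1) (hp : 0 ≤ p)
    (hne : (admissibleSpeeds ν p q).Nonempty) (hc : criticalSpeed ν p q < c) :
    ∃ z, 0 < z ∧ z ∈ integrableExpSet (waveVar c) ν ∧ waveCharFun ν p q c z < 0 := by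
  obtain ⟨c', ⟨z, hz, hzI, hR⟩, hc'⟩ := exists_lt_of_csInf_lt hne hc
  exact ⟨z, hz, mem_integrableExpSet_waveVar_of_le hν hz.le hc'.le hzI,
    (waveCharFun_lt_waveCharFun hν hp hz hc' hzI).trans_le hR⟩

/-- If `R(z, c#) < 0`, continuity in the speed would give `R(z, c) < 0` for some `c < c#`. -/
lemma waveCharFun_criticalSpeed_nonneg_of_lt [IsProbabilityMeasure ν] (hν : ∀ᵐ x ∂ν, 0 ≤ x.1)
    (hqp : q < p) (hpos : ∀ c, ∃ t, 0 < t ∧ t ∈ integrableExpSet (waveVar c) ν)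
    (hbdd : BddBelow (admissibleSpeeds ν p q)) {z' : ℝ} (hz : 0 ≤ z) (hzz' : z < z')
    (hz' : z' ∈ integrableExpSet (waveVar (criticalSpeed ν p q)) ν) :
    0 ≤ waveCharFun ν p q (criticalSpeed ν p q) z := by
  set cs := criticalSpeed ν p q
  rcases hz.eq_or_lt with rfl | hz0
  · rw [waveCharFun_zero]; linarith
  by_contra! hneg
  obtain ⟨t, ht, htI⟩ := hpos (cs - 1)
  obtain ⟨c₀, hc₀, hzI⟩ := exists_lt_mem_integrableExpSet_waveVar (by linarith) ht htI hz hzz' hz'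
  have hcont := (continuousOn_waveCharFun_speed (p := p) (q := q) hν hz hzI cs
    hc₀.le).mono_of_mem_nhdsWithin (mem_of_superset (Ioo_mem_nhdsLT hc₀) fun _ hx ↦ hx.1.le)
  obtain ⟨c, hRc, hc⟩ := ((hcont.eventually (gt_mem_nhds hneg)).and (Ioo_mem_nhdsLT hc₀)).exists
  exact hc.2.not_ge (csInf_le hbdd
    ⟨z, hz0, mem_integrableExpSet_waveVar_of_le hν hz hc.1.le hzI, hRc.le⟩)

lemma waveCharFun_criticalSpeed_nonneg [IsProbabilityMeasure ν] (hν : ∀ᵐ x ∂ν, 0 ≤ x.1)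
    (hqp : q < p) (hpos : ∀ c, ∃ t, 0 < t ∧ t ∈ integrableExpSet (waveVar c) ν)
    (hbdd : BddBelow (admissibleSpeeds ν p q)) (hz : 0 ≤ z)
    (hzI : z ∈ integrableExpSet (waveVar (criticalSpeed ν p q)) ν) :
    0 ≤ waveCharFun ν p q (criticalSpeed ν p q) z := by
  rcases hz.eq_or_lt with rfl | hz0
  · rw [waveCharFun_zero]; linarith
  refine ge_of_tendsto (tendsto_waveCharFun_nhdsLT hz0 hzI) ?_
  filter_upwards [Ioo_mem_nhdsLT hz0] with y hy
  exact waveCharFun_criticalSpeed_nonneg_of_lt hν hqp hpos hbdd hy.1.le hy.2 hzI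

/-- A limit point of the negative values of `R(·, c)` as `c ↓ c#`; by Fatou's lemma it lies in
the domain of `R(·, c#)`. -/
lemma exists_waveCharFun_criticalSpeed_nonpos [IsProbabilityMeasure ν] (hν : ∀ᵐ x ∂ν, 0 ≤ x.1)
    (hp : 0 < p) (hqp : q < p) (hne : (admissibleSpeeds ν p q).Nonempty) :
    ∃ lam, 0 < lam ∧ lam ∈ integrableExpSet (waveVar (criticalSpeed ν p q)) ν ∧
      waveCharFun ν p q (criticalSpeed ν p q) lam ≤ 0 := by
  set cs := criticalSpeed ν p q
  set cn : ℕ → ℝ := fun n ↦ cs + 1 / (n + 1)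
  have hcn : ∀ n, cs < cn n := fun n ↦ lt_add_of_pos_right cs Nat.one_div_pos_of_nat
  have hcn_le : ∀ n, cn n ≤ cs + 1 := fun n ↦ by
    have : (1 : ℝ) / (n + 1) ≤ 1 := div_le_one_of_le₀ (by simp) (by positivity)
    simp only [cn]
    linarith
  have hcn_tendsto : Tendsto cn atTop (𝓝 cs) := by
    have := (tendsto_one_div_add_atTop_nhds_zero_nat (𝕜 := ℝ)).const_add cs
    rwa [add_zero] at this
  choose zn hzn hznI hznR using fun n ↦
    exists_waveCharFun_neg_of_criticalSpeed_lt hν hp.le hne (hcn n)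
  have hbound : ∀ n, zn n ∈ Icc 0 (|cs| + |q| + 2) := fun n ↦ by
    have := sq_sub_mul_sub_neg_of_waveCharFun_nonpos hp (hznI n) (hznR n).le
    have := mul_le_mul_of_nonneg_right
      ((hcn_le n).trans (by linarith [le_abs_self cs] : cs + 1 ≤ |cs| + 1)) (hzn n).le
    refine ⟨(hzn n).le, le_of_not_gt fun h ↦ ?_⟩
    nlinarith [mul_lt_mul_of_pos_right h (hzn n), le_abs_self q,
      mul_nonneg (abs_nonneg q) (by linarith [abs_nonneg cs, abs_nonneg q] : (0 : ℝ) ≤ zn n - 1)]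
  obtain ⟨lam, hlam, φ, hφ, hlim⟩ := tendsto_subseq_of_bounded (Metric.isBounded_Icc _ _) hbound
  obtain ⟨hI, hR⟩ := waveCharFun_nonpos_of_tendsto hp (hcn_tendsto.comp hφ.tendsto_atTop) hlim
    (fun n ↦ hznI (φ n)) (fun n ↦ (hznR (φ n)).le)
  rw [isClosed_Icc.closure_eq] at hlam
  refine ⟨lam, hlam.1.lt_of_ne ?_, hI, hR⟩
  rintro rfl
  rw [waveCharFun_zero] at hR
  linarith

end CriticalSpeed

section Roots

variable {ν : Measure (ℝ × ℝ)} [IsProbabilityMeasure ν] {p q : ℝ} {R : ℝ → ℝ → ℝ}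
  {δ : ℝ → ℝ≥0∞}

lemma roots_of_criticalSpeed_lt (hν : ∀ᵐ x ∂ν, 0 ≤ x.1) (hp : 0 < p) (hqp : q < p)
    (hne : (admissibleSpeeds ν p q).Nonempty)
    (hR : ∀ c z, z ∈ integrableExpSet (waveVar c) ν → R z c = waveCharFun ν p q c z)
    (hδ_mem : ∀ c z, 0 ≤ z → ENNReal.ofReal z < δ c → z ∈ integrableExpSet (waveVar c) ν)
    (hδ_le : ∀ c z, z ∈ integrableExpSet (waveVar c) ν → ENNReal.ofReal z ≤ δ c)
    {c : ℝ} (hc : criticalSpeed ν p q < c) :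
    (∃ z, 0 < z ∧ ENNReal.ofReal z < δ c ∧ R z c = 0) ∧
      {z | 0 < z ∧ ENNReal.ofReal z < δ c ∧ R z c = 0}.encard ≤ 2 ∧
      (∀ z < 0, z ∈ integrableExpSet (waveVar c) ν → R z c ≠ 0) ∧
      (∀ z, 0 < z → ENNReal.ofReal z < δ c → R z c = 0 → z < (c + √(c ^ 2 + 4 * q)) / 2) := by
  obtain ⟨zs, hzs, hzsI, hRzs⟩ := exists_waveCharFun_neg_of_criticalSpeed_lt hν hp.le hne hc
  have hconvex := strictConvexOn_waveCharFun (ν := ν) (q := q) (c := c) hp.le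
  have hR0 : 0 < waveCharFun ν p q c 0 := by rw [waveCharFun_zero]; linarith
  refine ⟨?_, ?_, fun z hz hzI hRz ↦ ?_, fun z hz hzδ hRz ↦ ?_⟩
  · obtain ⟨z, hz, hRz⟩ := intermediate_value_Ioo' hzs.le (continuousOn_waveCharFun hzsI)
      ⟨hRzs, hR0⟩
    have hzI := integrable_exp_mul_of_le_of_le zero_mem_integrableExpSet hzsI hz.1.le hz.2.le
    exact ⟨z, hz.1, ((ENNReal.ofReal_lt_ofReal_iff hzs).2 hz.2).trans_le (hδ_le c zs hzsI),
      (hR c z hzI).trans hRz⟩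
  · refine (encard_le_encard fun z hz ↦ ?_).trans hconvex.encard_zeros_le_two
    have hzI := hδ_mem c z hz.1.le hz.2.1
    exact ⟨hzI, (hR c z hzI).symm.trans hz.2.2⟩
  · rw [hR c z hzI] at hRz
    exact hR0.not_gt (hconvex.neg_of_nonpos_of_nonpos hzI hzsI hz hzs hRz.le hRzs.le)
  · have hzI := hδ_mem c z hz.le hzδ
    exact lt_of_sq_sub_mul_sub_neg (sq_sub_mul_sub_neg_of_waveCharFun_nonpos hp hzI
      ((hR c z hzI).symm.trans hRz).le)

lemma roots_of_criticalSpeed (hν : ∀ᵐ x ∂ν, 0 ≤ x.1) (hp : 0 < p) (hqp : q < p)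
    (hpos : ∀ c, ∃ t, 0 < t ∧ t ∈ integrableExpSet (waveVar c) ν)
    (hR : ∀ c z, z ∈ integrableExpSet (waveVar c) ν → R z c = waveCharFun ν p q c z)
    (hδ_mem : ∀ c z, 0 ≤ z → ENNReal.ofReal z < δ c → z ∈ integrableExpSet (waveVar c) ν)
    (hδ_le : ∀ c z, z ∈ integrableExpSet (waveVar c) ν → ENNReal.ofReal z ≤ δ c)
    (hlim : ¬ Tendsto (fun z ↦ R z (criticalSpeed ν p q)) (leftApproach (δ (criticalSpeed ν p q)))
      (𝓝 0)) :
    ∃ lam, 0 < lam ∧ ENNReal.ofReal lam < δ (criticalSpeed ν p q) ∧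
      R lam (criticalSpeed ν p q) = 0 ∧
      ∀ z, 0 ≤ z → ENNReal.ofReal z < δ (criticalSpeed ν p q) → z ≠ lam →
        0 < R z (criticalSpeed ν p q) := by
  set cs := criticalSpeed ν p q
  have hbdd := bddBelow_admissibleSpeeds hν hp.le hqp hpos
  have hnonneg : ∀ z ∈ integrableExpSet (waveVar cs) ν ∩ Ici 0, 0 ≤ waveCharFun ν p q cs z :=
    fun z hz ↦ waveCharFun_criticalSpeed_nonneg hν hqp hpos hbdd hz.2 hz.1
  obtain ⟨lam, hlam, hlamI, hRlam⟩ :=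
    exists_waveCharFun_criticalSpeed_nonpos hν hp hqp (admissibleSpeeds_nonempty hν hp.le hpos)
  replace hRlam := hRlam.antisymm (hnonneg lam ⟨hlamI, hlam.le⟩)
  have hlamδ : ENNReal.ofReal lam < δ cs := by
    refine (hδ_le cs lam hlamI).lt_of_ne fun hδ ↦ hlim ?_
    rw [leftApproach, ← hδ, if_neg ENNReal.ofReal_ne_top, ENNReal.toReal_ofReal hlam.le]
    refine (hRlam ▸ tendsto_waveCharFun_nhdsLT hlam hlamI).congr' ?_
    filter_upwards [Ioo_mem_nhdsLT hlam] with z hz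
    exact (hR cs z (integrable_exp_mul_of_le_of_le zero_mem_integrableExpSet hlamI hz.1.le
      hz.2.le)).symm
  refine ⟨lam, hlam, hlamδ, (hR cs lam hlamI).trans hRlam, fun z hz hzδ hzlam ↦ ?_⟩
  have hzI := hδ_mem cs z hz hzδ
  rw [hR cs z hzI]
  exact ((strictConvexOn_waveCharFun hp.le).subset inter_subset_left
    (convex_integrableExpSet.inter (convex_Ici 0))).pos_of_ne_of_eq_zero hnonneg
    ⟨hlamI, hlam.le⟩ hRlam ⟨hzI, hz⟩ hzlam

end Roots

def kernelMeasure (K : ℝ → ℝ → ℝ) : Measure (ℝ × ℝ) :=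
  (volume.restrict (Ioi 0 ×ˢ univ)).withDensity fun x ↦ ENNReal.ofReal (K x.1 x.2)

section KernelMeasure

variable {K : ℝ → ℝ → ℝ}

lemma ae_kernelMeasure_nonneg_fst : ∀ᵐ x ∂kernelMeasure K, 0 ≤ x.1 :=
  (withDensity_absolutelyContinuous _ _).ae_le
    ((ae_restrict_mem (measurableSet_Ioi.prod MeasurableSet.univ)).mono fun _ hx ↦ le_of_lt hx.1)

lemma integrable_kernelMeasure_iff (hKmeas : Measurable fun x : ℝ × ℝ => K x.1 x.2)
    (hKnn : ∀ s w, 0 ≤ K s w) {g : ℝ × ℝ → ℝ} :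
    Integrable g (kernelMeasure K) ↔ IntegrableOn (fun x ↦ K x.1 x.2 * g x) (Ioi 0 ×ˢ univ) := by
  rw [kernelMeasure, integrable_withDensity_iff_integrable_smul' hKmeas.ennreal_ofReal
    (ae_of_all _ fun _ ↦ ENNReal.ofReal_lt_top)]
  simp only [ENNReal.toReal_ofReal (hKnn _ _), smul_eq_mul]
  rfl

lemma integral_kernelMeasure (hKmeas : Measurable fun x : ℝ × ℝ => K x.1 x.2)
    (hKnn : ∀ s w, 0 ≤ K s w) {g : ℝ × ℝ → ℝ}
    (hg : IntegrableOn (fun x ↦ K x.1 x.2 * g x) (Ioi 0 ×ˢ univ)) :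
    ∫ x, g x ∂kernelMeasure K = ∫ s in Ioi 0, ∫ w, K s w * g (s, w) := by
  rw [kernelMeasure, integral_withDensity_eq_integral_toReal_smul hKmeas.ennreal_ofReal
    (ae_of_all _ fun _ ↦ ENNReal.ofReal_lt_top)]
  simp only [ENNReal.toReal_ofReal (hKnn _ _), smul_eq_mul]
  rw [IntegrableOn] at hg
  rw [Measure.volume_eq_prod, ← Measure.prod_restrict, Measure.restrict_univ] at hg ⊢
  exact integral_prod _ hg

lemma isProbabilityMeasure_kernelMeasure (hKmeas : Measurable fun x : ℝ × ℝ => K x.1 x.2)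
    (hKnn : ∀ s w, 0 ≤ K s w)
    (hKint : IntegrableOn (fun x : ℝ × ℝ => K x.1 x.2) (Ioi 0 ×ˢ univ))
    (hKnorm : (∫ s in Ioi (0:ℝ), ∫ w : ℝ, K s w) = 1) :
    IsProbabilityMeasure (kernelMeasure K) := by
  have h := integral_kernelMeasure hKmeas hKnn (g := fun _ ↦ 1) (by simpa using hKint)
  simp only [integral_const, smul_eq_mul, mul_one, hKnorm] at h
  exact ⟨(ENNReal.toReal_eq_one_iff _).1 h⟩

lemma integrableOn_iff_mem_integrableExpSet (hKmeas : Measurable fun x : ℝ × ℝ => K x.1 x.2)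
    (hKnn : ∀ s w, 0 ≤ K s w) (c z : ℝ) :
    IntegrableOn (fun x : ℝ × ℝ => K x.1 x.2 * Real.exp (-z * (c * x.1 + x.2)))
      (Ioi 0 ×ˢ univ) ↔ z ∈ integrableExpSet (waveVar c) (kernelMeasure K) := by
  simp only [integrableExpSet, mem_ofPred_eq, integrable_kernelMeasure_iff hKmeas hKnn, waveVar,
    neg_mul, mul_neg]

lemma Rfun_eq_waveCharFun (hKmeas : Measurable fun x : ℝ × ℝ => K x.1 x.2)
    (hKnn : ∀ s w, 0 ≤ K s w) {p q c z : ℝ}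
    (h : z ∈ integrableExpSet (waveVar c) (kernelMeasure K)) :
    Rfun K p q z c = waveCharFun (kernelMeasure K) p q c z := by
  rw [waveCharFun, mgf, integral_kernelMeasure hKmeas hKnn
    ((integrable_kernelMeasure_iff hKmeas hKnn).1 h)]
  simp only [Rfun, waveVar, neg_mul, mul_neg]

end KernelMeasure

/-- Properties of the real zeros of `R(·,c)`. -/
theorem char_function_roots
    (K : ℝ → ℝ → ℝ) (δ : ℝ → ℝ≥0∞) (p q : ℝ)
    (hq : 0 < q) (hpq : q < p)
    (hKmeas : Measurable fun x : ℝ × ℝ => K x.1 x.2)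
    (hKnn : ∀ s w, 0 ≤ K s w)
    (hKint : IntegrableOn (fun x : ℝ × ℝ => K x.1 x.2) (Set.Ioi 0 ×ˢ Set.univ))
    (hKnorm : (∫ s in Set.Ioi (0:ℝ), ∫ w : ℝ, K s w) = 1)
    (hδpos : ∀ c, 0 < δ c)
    (hKconv : ∀ c z : ℝ, 0 ≤ z → ENNReal.ofReal z < δ c →
      IntegrableOn (fun x : ℝ × ℝ => K x.1 x.2 * Real.exp (-z * (c * x.1 + x.2)))
        (Set.Ioi 0 ×ˢ Set.univ))
    (hKdiv : ∀ c z : ℝ, δ c < ENNReal.ofReal z →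
      ¬ IntegrableOn (fun x : ℝ × ℝ => K x.1 x.2 * Real.exp (-z * (c * x.1 + x.2)))
        (Set.Ioi 0 ×ˢ Set.univ)) :
    ∃ csharp : ℝ,
      -- (i) : for any c > csharp
      (∀ c : ℝ, csharp < c →
        -- at least one positive zero in (0, δ(c))
        (∃ z : ℝ, 0 < z ∧ ENNReal.ofReal z < δ c ∧ Rfun K p q z c = 0) ∧
        -- at most two zeros in (0, δ(c))
        {z : ℝ | 0 < z ∧ ENNReal.ofReal z < δ c ∧ Rfun K p q z c = 0}.encard ≤ 2 ∧
        -- no negative zero (where the integral converges)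
        (∀ z : ℝ, z < 0 →
          IntegrableOn (fun x : ℝ × ℝ => K x.1 x.2 * Real.exp (-z * (c * x.1 + x.2)))
            (Set.Ioi 0 ×ˢ Set.univ) → Rfun K p q z c ≠ 0) ∧
        -- every zero is below the positive root of z² - cz - q = 0
        (∀ z : ℝ, 0 < z → ENNReal.ofReal z < δ c → Rfun K p q z c = 0 →
          z < (c + Real.sqrt (c ^ 2 + 4 * q)) / 2)) ∧
      -- (ii) : at c = csharp, if lim_{z ↑ δ(csharp)} R(z,csharp) ≠ 0
      (¬ Tendsto (fun z => Rfun K p q z csharp) (leftApproach (δ csharp)) (nhds 0) →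
        ∃ lam : ℝ, 0 < lam ∧ ENNReal.ofReal lam < δ csharp ∧
          Rfun K p q lam csharp = 0 ∧
          ∀ z : ℝ, 0 ≤ z → ENNReal.ofReal z < δ csharp → z ≠ lam →
            0 < Rfun K p q z csharp) := by
  have hp : 0 < p := hq.trans hpq
  have := isProbabilityMeasure_kernelMeasure hKmeas hKnn hKint hKnorm
  have hI := integrableOn_iff_mem_integrableExpSet hKmeas hKnn
  have hδ_mem : ∀ c z, 0 ≤ z → ENNReal.ofReal z < δ c → z ∈ integrableExpSet (waveVar c) _ :=
    fun c z hz hzδ ↦ (hI c z).1 (hKconv c z hz hzδ)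
  have hδ_le : ∀ c z, z ∈ integrableExpSet (waveVar c) _ → ENNReal.ofReal z ≤ δ c :=
    fun c z hz ↦ le_of_not_gt fun hzδ ↦ hKdiv c z hzδ ((hI c z).2 hz)
  have hpos : ∀ c, ∃ t, 0 < t ∧ t ∈ integrableExpSet (waveVar c) (kernelMeasure K) := fun c ↦ by
    obtain ⟨t, ht, ht0, htδ⟩ := ENNReal.lt_iff_exists_real_btwn.1 (hδpos c)
    exact ⟨t, ENNReal.ofReal_pos.1 ht0, hδ_mem c t ht htδ⟩
  have hR := fun c z ↦ Rfun_eq_waveCharFun (p := p) (q := q) (c := c) (z := z) hKmeas hKnn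
  refine ⟨criticalSpeed (kernelMeasure K) p q, fun c hc ↦ ?_,
    roots_of_criticalSpeed ae_kernelMeasure_nonneg_fst hp hpq hpos hR hδ_mem hδ_le⟩
  obtain ⟨hexists, hcard, hneg, hbound⟩ := roots_of_criticalSpeed_lt ae_kernelMeasure_nonneg_fst
    hp hpq (admissibleSpeeds_nonempty ae_kernelMeasure_nonneg_fst hp.le hpos) hR hδ_mem hδ_le hc
  exact ⟨hexists, hcard, fun z hz hzI ↦ hneg z hz ((hI c z).1 hzI), hbound⟩
end
end

section
/- Let β > 0, c ∈ ℝ, let ν(c) < 0 < μ(c) be the two real roots of z² − cz − β = 0, σ(c) = √(c² + 4β), and define k₁(s) = σ(c)⁻¹·e^{ν(c)s} for s ≥ 0 and k₁(s) = σ(c)⁻¹·e^{μ(c)s} for s < 0, and k₂(r) = ∫₀^∞ K(s, r − cs) ds. Let L > 0, q₀ := inf_{s≥0} f'(s), and χ_L(z,c) := z² − cz − q₀ + L·∫₀^∞∫_ℝ K(s,w)·e^{−z(cs+w)} dw ds. Then for every m with 0 < m < μ(c) and m < γ#(c), and for every t ∈ ℝ: L·∫_ℝ (k₁ * k₂)(s)·e^{m(t−s)}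 ds + (β − q₀)·∫_ℝ k₁(s)·e^{m(t−s)} ds = e^{mt}·(1 + χ_L(m,c)/(β + cm − m²)). In particular this quantity equals e^{mt} when χ_L(m,c) = 0, and is strictly less than e^{mt} when χ_L(m,c) < 0. -/
/-!
Multiplying by `e^{-m s}` turns both integrals into two-sided Laplace transforms at `m`.
The Laplace transform of a convolution is the product of the transforms; that of `k₁` is
`1 / ((m - ν)(μ - m)) = 1 / (β + c m - m²)` for `ν < m < μ`, and that of `k₂` is, after the
shear `w = r - c s`, the double integral appearing in `χ_L`. The identity is then algebra.
-/

open MeasureTheory Filter Set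
open scoped ENNReal

noncomputable section

/-- positive root `μ(c)` of `z² - cz - β = 0`. -/
def muRoot (β c : ℝ) : ℝ := (c + Real.sqrt (c ^ 2 + 4 * β)) / 2

/-- negative root `ν(c)` of `z² - cz - β = 0`. -/
def nuRoot (β c : ℝ) : ℝ := (c - Real.sqrt (c ^ 2 + 4 * β)) / 2

/-- the Green's function kernel `k₁`. -/
def k1 (β c : ℝ) (s : ℝ) : ℝ :=
  if 0 ≤ s then Real.exp (nuRoot β c * s) / Real.sqrt (c ^ 2 + 4 * β)
  else Real.exp (muRoot β c * s) / Real.sqrt (c ^ 2 + 4 * β)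

/-- the kernel `k₂(r) = ∫₀^∞ K(s, r - cs) ds`. -/
def k2 (K : ℝ → ℝ → ℝ) (c : ℝ) (r : ℝ) : ℝ := ∫ s in Set.Ioi (0:ℝ), K s (r - c * s)

/-- convolution of two functions on `ℝ`. -/
def conv (a b : ℝ → ℝ) (t : ℝ) : ℝ := ∫ r : ℝ, a (t - r) * b r

/-- `χ_L(z,c) = z² - cz - q₀ + L ∫₀^∞∫_ℝ K(s,w) e^{-z(cs+w)}`. -/
def chiL (K : ℝ → ℝ → ℝ) (q₀ L : ℝ) (z c : ℝ) : ℝ :=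
  z ^ 2 - c * z - q₀ +
    L * ∫ s in Set.Ioi (0:ℝ), ∫ w : ℝ, K s w * Real.exp (-z * (c * s + w))

lemma integral_mul_exp_mul_sub (g : ℝ → ℝ) (m t : ℝ) :
    ∫ s, g s * Real.exp (m * (t - s)) = Real.exp (m * t) * ∫ s, g s * Real.exp (-(m * s)) := by
  rw [← integral_const_mul]
  congr 1 with s
  rw [mul_sub, sub_eq_add_neg, Real.exp_add]
  ring

lemma integral_conv_mul_exp {a b : ℝ → ℝ} {m : ℝ}
    (ha : Integrable fun s => a s * Real.exp (-(m * s)))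
    (hb : Integrable fun s => b s * Real.exp (-(m * s))) :
    ∫ s, conv a b s * Real.exp (-(m * s)) =
      (∫ s, a s * Real.exp (-(m * s))) * ∫ s, b s * Real.exp (-(m * s)) := by
  have hconv : ∀ s, conv a b s * Real.exp (-(m * s)) =
      ∫ r, b r * Real.exp (-(m * r)) * (a (s - r) * Real.exp (-(m * (s - r)))) := by
    intro s
    rw [conv, ← integral_mul_const]
    congr 1 with r
    rw [show -(m * s) = -(m * r) + -(m * (s - r)) by ring, Real.exp_add]
    ring
  simp_rw [hconv]
  rw [mul_comm]
  simpa [convolution] using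
    integral_convolution (L := ContinuousLinearMap.mul ℝ ℝ) (μ := volume) (ν := volume) hb ha

lemma muRoot_sub_nuRoot (β c : ℝ) : muRoot β c - nuRoot β c = √(c ^ 2 + 4 * β) := by
  unfold muRoot nuRoot; ring

lemma nuRoot_neg {β : ℝ} (hβ : 0 < β) (c : ℝ) : nuRoot β c < 0 := by
  have hc : |c| < √(c ^ 2 + 4 * β) := by
    rw [← Real.sqrt_sq_eq_abs]
    exact Real.sqrt_lt_sqrt (sq_nonneg c) (by linarith)
  unfold nuRoot
  linarith [le_abs_self c]

lemma sub_nuRoot_mul_muRoot_sub {β c : ℝ} (h : 0 ≤ c ^ 2 + 4 * β) (m : ℝ) :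
    (m - nuRoot β c) * (muRoot β c - m) = β + c * m - m ^ 2 := by
  unfold muRoot nuRoot
  linear_combination (1 / 4 : ℝ) * Real.sq_sqrt h

section k1

variable {β c m : ℝ}

lemma k1_mul_exp_eqOn_Ioi :
    EqOn (fun s => k1 β c s * Real.exp (-(m * s)))
      (fun s => Real.exp ((nuRoot β c - m) * s) / √(c ^ 2 + 4 * β)) (Ioi 0) := by
  intro s hs
  simp only [k1, if_pos (mem_Ioi.mp hs).le]
  rw [div_mul_eq_mul_div, ← Real.exp_add]
  ring_nf

lemma k1_mul_exp_eqOn_Iic :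
    EqOn (fun s => k1 β c s * Real.exp (-(m * s)))
      (fun s => Real.exp ((muRoot β c - m) * s) / √(c ^ 2 + 4 * β)) (Iic 0) := by
  intro s hs
  rcases (mem_Iic.mp hs).lt_or_eq with hs | rfl
  · simp only [k1, if_neg (not_le.mpr hs)]
    rw [div_mul_eq_mul_div, ← Real.exp_add]
    ring_nf
  · simp [k1]

variable (hν : nuRoot β c < m) (hμ : m < muRoot β c)
include hν hμ

lemma integrable_k1_mul_exp : Integrable fun s => k1 β c s * Real.exp (-(m * s)) := by
  rw [← integrableOn_univ, ← Iic_union_Ioi (a := (0 : ℝ))]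
  refine IntegrableOn.union ?_ ?_
  · exact IntegrableOn.congr_fun
      ((integrableOn_exp_mul_Iic (a := muRoot β c - m) (by linarith) 0).div_const _)
      k1_mul_exp_eqOn_Iic.symm measurableSet_Iic
  · exact IntegrableOn.congr_fun
      ((integrableOn_exp_mul_Ioi (a := nuRoot β c - m) (by linarith) 0).div_const _)
      k1_mul_exp_eqOn_Ioi.symm measurableSet_Ioi

lemma integral_k1_mul_exp :
    ∫ s, k1 β c s * Real.exp (-(m * s)) = (β + c * m - m ^ 2)⁻¹ := by
  have hσ : 0 < √(c ^ 2 + 4 * β) := by linarith [muRoot_sub_nuRoot β c]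
  have hint := integrable_k1_mul_exp hν hμ
  rw [← intervalIntegral.integral_Iic_add_Ioi hint.integrableOn hint.integrableOn,
    setIntegral_congr_fun measurableSet_Iic k1_mul_exp_eqOn_Iic,
    setIntegral_congr_fun measurableSet_Ioi k1_mul_exp_eqOn_Ioi,
    integral_div, integral_div, integral_exp_mul_Iic (by linarith),
    integral_exp_mul_Ioi (by linarith),
    ← sub_nuRoot_mul_muRoot_sub (Real.sqrt_pos.mp hσ).le, ← muRoot_sub_nuRoot]
  simp only [mul_zero, Real.exp_zero]
  have h₀ : m - nuRoot β c ≠ 0 := by linarith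
  have h₁ : nuRoot β c - m ≠ 0 := by linarith
  have h₂ : muRoot β c - m ≠ 0 := by linarith
  have h₃ : muRoot β c - nuRoot β c ≠ 0 := by linarith
  field_simp
  ring

end k1

section k2

variable {K : ℝ → ℝ → ℝ} {c m : ℝ}

lemma integrable_sheared_kernel
    (hK : IntegrableOn (fun x : ℝ × ℝ => K x.1 x.2 * Real.exp (-m * (c * x.1 + x.2)))
      (Ioi 0 ×ˢ univ)) :
    Integrable (fun p : ℝ × ℝ => K p.1 (p.2 - c * p.1) * Real.exp (-m * p.2))
      ((volume.restrict (Ioi 0)).prod volume) := by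
  rw [IntegrableOn, Measure.volume_eq_prod, ← Measure.prod_restrict, Measure.restrict_univ] at hK
  have hshear : MeasurePreserving (fun p : ℝ × ℝ => (p.1, p.2 - c * p.1))
      ((volume.restrict (Ioi 0)).prod volume) ((volume.restrict (Ioi 0)).prod volume) :=
    (MeasurePreserving.id _).skew_product (g := fun s r => r - c * s)
      (measurable_snd.sub (measurable_fst.const_mul c))
      (ae_of_all _ fun s => by simpa [sub_eq_add_neg] using map_add_right_eq_self volume _)
  convert (hshear.integrable_comp hK.1).mpr hK using 3 with p
  simp

lemma k2_mul_exp_eq (r : ℝ) :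
    k2 K c r * Real.exp (-(m * r)) = ∫ s in Ioi 0, K s (r - c * s) * Real.exp (-m * r) := by
  rw [k2, ← integral_mul_const, neg_mul]

variable (hK : IntegrableOn (fun x : ℝ × ℝ => K x.1 x.2 * Real.exp (-m * (c * x.1 + x.2)))
  (Ioi 0 ×ˢ univ))
include hK

lemma integrable_k2_mul_exp : Integrable fun r => k2 K c r * Real.exp (-(m * r)) :=
  (integrable_sheared_kernel hK).swap.integral_prod_left.congr
    (ae_of_all _ fun r => (k2_mul_exp_eq r).symm)

lemma integral_k2_mul_exp :
    ∫ r, k2 K c r * Real.exp (-(m * r)) =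
      ∫ s in Ioi 0, ∫ w, K s w * Real.exp (-m * (c * s + w)) := by
  simp_rw [k2_mul_exp_eq]
  rw [← integral_integral_swap (integrable_sheared_kernel hK)]
  congr 1 with s
  simpa using integral_sub_right_eq_self (fun w => K s w * Real.exp (-m * (c * s + w))) (c * s)

end k2

theorem exponential_eigenfunction_identity_general
    (K : ℝ → ℝ → ℝ) (γsharp : ℝ → ℝ≥0∞) (β c L q₀ : ℝ)
    (hβ : 0 < β)
    (hKconv : ∀ c' z : ℝ, 0 ≤ z → ENNReal.ofReal z < γsharp c' →
      IntegrableOn (fun x : ℝ × ℝ => K x.1 x.2 * Real.exp (-z * (c' * x.1 + x.2)))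
        (Set.Ioi 0 ×ˢ Set.univ)) :
    ∀ m t : ℝ, 0 < m → m < muRoot β c → ENNReal.ofReal m < γsharp c →
      (L * (∫ s : ℝ, conv (k1 β c) (k2 K c) s * Real.exp (m * (t - s))) +
        (β - q₀) * (∫ s : ℝ, k1 β c s * Real.exp (m * (t - s)))
        = Real.exp (m * t) * (1 + chiL K q₀ L m c / (β + c * m - m ^ 2))) ∧
      (chiL K q₀ L m c = 0 →
        L * (∫ s : ℝ, conv (k1 β c) (k2 K c) s * Real.exp (m * (t - s))) +
          (β - q₀) * (∫ s : ℝ, k1 β c s * Real.exp (m * (t - s)))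
          = Real.exp (m * t)) ∧
      (chiL K q₀ L m c < 0 →
        L * (∫ s : ℝ, conv (k1 β c) (k2 K c) s * Real.exp (m * (t - s))) +
          (β - q₀) * (∫ s : ℝ, k1 β c s * Real.exp (m * (t - s)))
          < Real.exp (m * t)) := by
  intro m t hm hmμ hmγ
  have hmν : nuRoot β c < m := (nuRoot_neg hβ c).trans hm
  have hK := hKconv c m hm.le hmγ
  have hD : 0 < β + c * m - m ^ 2 := by
    rw [← sub_nuRoot_mul_muRoot_sub (by positivity)]
    exact mul_pos (by linarith) (by linarith)
  have identity : L * (∫ s, conv (k1 β c) (k2 K c) s * Real.exp (m * (t - s))) +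
      (β - q₀) * (∫ s, k1 β c s * Real.exp (m * (t - s)))
      = Real.exp (m * t) * (1 + chiL K q₀ L m c / (β + c * m - m ^ 2)) := by
    rw [integral_mul_exp_mul_sub, integral_mul_exp_mul_sub,
      integral_conv_mul_exp (integrable_k1_mul_exp hmν hmμ) (integrable_k2_mul_exp hK),
      integral_k1_mul_exp hmν hmμ, integral_k2_mul_exp hK, chiL, div_eq_mul_inv]
    linear_combination Real.exp (m * t) * mul_inv_cancel₀ hD.ne'
  refine ⟨identity, fun hχ => by simp [identity, hχ], fun hχ => ?_⟩
  rw [identity]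
  exact mul_lt_of_lt_one_right (Real.exp_pos _) (by linarith [div_neg_of_neg_of_pos hχ hD])

/-- The key computation of `L ∫ (k₁*k₂)(s) e^{m(t-s)} ds + (β-q₀) ∫ k₁(s) e^{m(t-s)} ds`. -/
theorem exponential_eigenfunction_identity
    (K : ℝ → ℝ → ℝ) (γsharp : ℝ → ℝ≥0∞) (f f' : ℝ → ℝ) (β c L q₀ : ℝ)
    (hβ : 0 < β) (hL : 0 < L)
    (hKmeas : Measurable fun x : ℝ × ℝ => K x.1 x.2)
    (hKnn : ∀ s w, 0 ≤ K s w)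
    (hKint : IntegrableOn (fun x : ℝ × ℝ => K x.1 x.2) (Set.Ioi 0 ×ˢ Set.univ))
    (hKnorm : (∫ s in Set.Ioi (0:ℝ), ∫ w : ℝ, K s w) = 1)
    (hγpos : ∀ c', 0 < γsharp c')
    (hKconv : ∀ c' z : ℝ, 0 ≤ z → ENNReal.ofReal z < γsharp c' →
      IntegrableOn (fun x : ℝ × ℝ => K x.1 x.2 * Real.exp (-z * (c' * x.1 + x.2)))
        (Set.Ioi 0 ×ˢ Set.univ))
    (hKdiv : ∀ c' z : ℝ, γsharp c' < ENNReal.ofReal z →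
      ¬ IntegrableOn (fun x : ℝ × ℝ => K x.1 x.2 * Real.exp (-z * (c' * x.1 + x.2)))
        (Set.Ioi 0 ×ˢ Set.univ))
    -- f ∈ C¹(ℝ₊, ℝ₊) with q₀ = inf f' < β
    (hfd : ∀ s, 0 ≤ s → HasDerivWithinAt f (f' s) (Set.Ici 0) s)
    (hf'c : ContinuousOn f' (Set.Ici 0))
    (hfnn : ∀ s, 0 ≤ s → 0 ≤ f s)
    (hq₀ : q₀ = sInf (f' '' Set.Ici 0))
    (hq₀β : q₀ < β) :
    ∀ m t : ℝ, 0 < m → m < muRoot β c → ENNReal.ofReal m < γsharp c →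
      (L * (∫ s : ℝ, conv (k1 β c) (k2 K c) s * Real.exp (m * (t - s))) +
        (β - q₀) * (∫ s : ℝ, k1 β c s * Real.exp (m * (t - s)))
        = Real.exp (m * t) * (1 + chiL K q₀ L m c / (β + c * m - m ^ 2))) ∧
      (chiL K q₀ L m c = 0 →
        L * (∫ s : ℝ, conv (k1 β c) (k2 K c) s * Real.exp (m * (t - s))) +
          (β - q₀) * (∫ s : ℝ, k1 β c s * Real.exp (m * (t - s)))
          = Real.exp (m * t)) ∧
      (chiL K q₀ L m c < 0 →
        L * (∫ s : ℝ, conv (k1 β c) (k2 K c) s * Real.exp (m * (t - s))) +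
          (β - q₀) * (∫ s : ℝ, k1 β c s * Real.exp (m * (t - s)))
          < Real.exp (m * t)) :=
  exponential_eigenfunction_identity_general K γsharp β c L q₀ hβ hKconv
end
end

section
/- Assume (H0)–(H2) and let β > f'(0) be large enough that βs − f(s) ≥ 0 for all s in the range of φ. If φ : ℝ → ℝ₊ is a bounded, nonnegative, twice continuously differentiable solution of the profile equation y''(t) − c·y'(t) − f(y(t)) + ∫₀^∞∫_ℝ K(s,w)·g(y(t − cs − w)) dw ds = 0 on ℝ, and φ(t₀) = 0 for some t₀ ∈ ℝ, then φ(t) = 0 for all t ∈ ℝ. -/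
/-!
The nonlocal term is nonnegative and `β s ≥ f s` on the range of `φ`, so `φ` is a nonnegative
supersolution: `φ'' - c φ' ≤ β φ`. Since `φ ≥ 0`, `β` may be replaced by any `μ (μ - c) ≥ β`,
and then the operator factors as `(D - ν)(D - μ)` with `ν = c - μ`. At the zero `t₀` of `φ` also
`φ'(t₀) = 0`, and the integrating factors `e^{-ν t}` and `e^{-μ t}` propagate the vanishing of
`φ' - μ φ` and then of `φ` to the whole line.
-/

open MeasureTheory Filter Set
open scoped ENNReal

noncomputable section

/-- The traveling-wave profile equation. -/
def ProfileEq (K : ℝ → ℝ → ℝ) (f g : ℝ → ℝ) (c : ℝ) (φ : ℝ → ℝ) : Prop :=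
  ∀ t : ℝ, deriv (deriv φ) t - c * deriv φ t - f (φ t)
      + (∫ s in Set.Ioi (0:ℝ), ∫ w : ℝ, K s w * g (φ (t - c * s - w))) = 0

open Real

lemma antitoneOn_exp_neg_mul_mul_of_deriv_le {u : ℝ → ℝ} {ν : ℝ} {s : Set ℝ} (hs : Convex ℝ s)
    (hu : Differentiable ℝ u) (h : ∀ t ∈ s, deriv u t ≤ ν * u t) :
    AntitoneOn (fun t => exp (-ν * t) * u t) s := by
  have hP : ∀ t, HasDerivAt (fun t => exp (-ν * t) * u t)
      (exp (-ν * t) * (deriv u t - ν * u t)) t := fun t =>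
    ((((hasDerivAt_id t).const_mul (-ν)).exp).mul (hu t).hasDerivAt).congr_deriv
      (by simp only [id]; ring)
  have hPd : Differentiable ℝ fun t => exp (-ν * t) * u t := fun t => (hP t).differentiableAt
  refine antitoneOn_of_deriv_nonpos hs hPd.continuous.continuousOn hPd.differentiableOn
    fun t ht => ?_
  rw [(hP t).deriv]
  exact mul_nonpos_of_nonneg_of_nonpos (exp_nonneg _)
    (sub_nonpos.2 (h t (interior_subset ht)))

lemma nonpos_of_deriv_le_mul_of_le {u : ℝ → ℝ} {ν t₀ t : ℝ} (hu : Differentiable ℝ u)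
    (h : ∀ t ∈ Ici t₀, deriv u t ≤ ν * u t) (h₀ : u t₀ = 0) (ht : t₀ ≤ t) : u t ≤ 0 := by
  have := antitoneOn_exp_neg_mul_mul_of_deriv_le (convex_Ici t₀) hu h self_mem_Ici ht ht
  simp only [h₀, mul_zero] at this
  exact nonpos_of_mul_nonpos_right this (exp_pos _)

lemma nonneg_of_deriv_le_mul_of_ge {u : ℝ → ℝ} {ν t₀ t : ℝ} (hu : Differentiable ℝ u)
    (h : ∀ t ∈ Iic t₀, deriv u t ≤ ν * u t) (h₀ : u t₀ = 0) (ht : t ≤ t₀) : 0 ≤ u t := by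
  have := antitoneOn_exp_neg_mul_mul_of_deriv_le (convex_Iic t₀) hu h ht self_mem_Iic ht
  simp only [h₀, mul_zero] at this
  exact nonneg_of_mul_nonneg_right this (exp_pos _)

theorem eq_zero_of_deriv_deriv_sub_le_mul {φ : ℝ → ℝ} {c β t₀ : ℝ} (hφ : ContDiff ℝ 2 φ)
    (hnn : ∀ t, 0 ≤ φ t) (hsuper : ∀ t, deriv (deriv φ) t - c * deriv φ t ≤ β * φ t)
    (h₀ : φ t₀ = 0) (t : ℝ) : φ t = 0 := by
  have hd : Differentiable ℝ φ := hφ.differentiable (by norm_num)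
  have hd' : Differentiable ℝ (deriv φ) :=
    ((contDiff_succ_iff_deriv (n := 1)).mp hφ).2.2.differentiable (by norm_num)
  obtain ⟨μ, hμ⟩ : ∃ μ : ℝ, β ≤ μ * (μ - c) :=
    ⟨-(|c| + |β| + 1), by nlinarith [abs_nonneg c, abs_nonneg β, neg_abs_le c, le_abs_self β]⟩
  set v : ℝ → ℝ := fun t => deriv φ t - μ * φ t with hv
  have hvd : Differentiable ℝ v := hd'.sub (hd.const_mul μ)
  have hv_super : ∀ t, deriv v t ≤ (c - μ) * v t := fun t => by
    have hderiv : deriv v t = deriv (deriv φ) t - μ * deriv φ t :=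
      ((hd' t).hasDerivAt.sub ((hd t).hasDerivAt.const_mul μ)).deriv
    rw [hderiv, hv]
    nlinarith [hsuper t, mul_nonneg (sub_nonneg.2 hμ) (hnn t)]
  have hv₀ : v t₀ = 0 := by
    have hmin : IsLocalMin φ t₀ := Eventually.of_forall fun t => h₀ ▸ hnn t
    simp [hv, hmin.deriv_eq_zero, h₀]
  refine le_antisymm ?_ (hnn t)
  rcases le_total t₀ t with ht | ht
  · refine nonpos_of_deriv_le_mul_of_le hd (ν := μ) (fun s hs => ?_) h₀ ht
    linarith [nonpos_of_deriv_le_mul_of_le hvd (fun s _ => hv_super s) hv₀ hs]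
  · have hneg := nonneg_of_deriv_le_mul_of_ge hd.neg (ν := μ) (fun s hs => ?_) (by simp [h₀]) ht
    · simpa using hneg
    rw [deriv.neg, Pi.neg_apply]
    linarith [nonneg_of_deriv_le_mul_of_ge hvd (fun s _ => hv_super s) hv₀ hs]

lemma ProfileEq.deriv_deriv_sub_le_mul {K : ℝ → ℝ → ℝ} {f g : ℝ → ℝ} {β c : ℝ} {φ : ℝ → ℝ}
    (hKnn : ∀ s w, 0 ≤ K s w) (hgnn : ∀ s, 0 ≤ s → 0 ≤ g s) (hφnn : ∀ t, 0 ≤ φ t)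
    (hβrange : ∀ t, 0 ≤ β * φ t - f (φ t)) (hφsol : ProfileEq K f g c φ) (t : ℝ) :
    deriv (deriv φ) t - c * deriv φ t ≤ β * φ t := by
  have hnonlocal : 0 ≤ ∫ s in Ioi (0:ℝ), ∫ w : ℝ, K s w * g (φ (t - c * s - w)) :=
    setIntegral_nonneg measurableSet_Ioi fun s _ =>
      integral_nonneg fun w => mul_nonneg (hKnn s w) (hgnn _ (hφnn _))
  linarith [hφsol t, hβrange t]

theorem vanishing_point_implies_zero_general
    (K : ℝ → ℝ → ℝ)
    (f g : ℝ → ℝ) (β c : ℝ) (φ : ℝ → ℝ)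
    -- (H0)
    (hKnn : ∀ s w, 0 ≤ K s w)
    -- (H1)
    (hgnn : ∀ s, 0 ≤ s → 0 ≤ g s)
    -- β is large enough: β > f'(0) and βs - f(s) ≥ 0 on the range of φ
    (hβrange : ∀ t, 0 ≤ β * φ t - f (φ t))
    -- φ is a bounded nonnegative C² solution
    (hφC2 : ContDiff ℝ 2 φ)
    (hφnn : ∀ t, 0 ≤ φ t)
    (hφsol : ProfileEq K f g c φ)
    -- φ vanishes at some point
    (t₀ : ℝ) (hφt₀ : φ t₀ = 0) :
    ∀ t, φ t = 0 :=
  eq_zero_of_deriv_deriv_sub_le_mul hφC2 hφnn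
    (hφsol.deriv_deriv_sub_le_mul hKnn hgnn hφnn hβrange) hφt₀

/-- A bounded nonnegative solution of the profile equation vanishing at one point
vanishes identically. -/
theorem vanishing_point_implies_zero
    (K : ℝ → ℝ → ℝ) (γsharp : ℝ → ℝ≥0∞)
    (f f' g : ℝ → ℝ) (g'0 β c : ℝ) (φ : ℝ → ℝ)
    -- (H0)
    (hKmeas : Measurable fun x : ℝ × ℝ => K x.1 x.2)
    (hKnn : ∀ s w, 0 ≤ K s w)
    (hKint : IntegrableOn (fun x : ℝ × ℝ => K x.1 x.2) (Set.Ioi 0 ×ˢ Set.univ))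
    (hKnorm : (∫ s in Set.Ioi (0:ℝ), ∫ w : ℝ, K s w) = 1)
    (hγpos : ∀ c', 0 < γsharp c')
    (hKconv : ∀ c' z : ℝ, 0 ≤ z → ENNReal.ofReal z < γsharp c' →
      IntegrableOn (fun x : ℝ × ℝ => K x.1 x.2 * Real.exp (-z * (c' * x.1 + x.2)))
        (Set.Ioi 0 ×ˢ Set.univ))
    (hKdiv : ∀ c' z : ℝ, γsharp c' < ENNReal.ofReal z →
      ¬ IntegrableOn (fun x : ℝ × ℝ => K x.1 x.2 * Real.exp (-z * (c' * x.1 + x.2)))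
        (Set.Ioi 0 ×ˢ Set.univ))
    -- (H1)
    (hgc : ContinuousOn g (Set.Ici 0))
    (hgnn : ∀ s, 0 ≤ s → 0 ≤ g s)
    (hg0 : g 0 = 0)
    (hgpos : ∀ s, 0 < s → 0 < g s)
    (hgd : HasDerivWithinAt g g'0 (Set.Ici 0) 0)
    -- (H2)
    (hfd : ∀ s, 0 ≤ s → HasDerivWithinAt f (f' s) (Set.Ici 0) s)
    (hf'c : ContinuousOn f' (Set.Ici 0))
    (hfnn : ∀ s, 0 ≤ s → 0 ≤ f s)
    (hfmono : StrictMonoOn f (Set.Ici 0))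
    (hf0 : f 0 = 0)
    (hf'0pos : 0 < f' 0) (hf'0lt : f' 0 < g'0)
    (hgbdd : BddAbove (g '' Set.Ici 0))
    (hfinf : ∃ s₀, 0 ≤ s₀ ∧ sSup (g '' Set.Ici 0) < f s₀)
    -- β is large enough: β > f'(0) and βs - f(s) ≥ 0 on the range of φ
    (hβ : f' 0 < β)
    (hβrange : ∀ t, 0 ≤ β * φ t - f (φ t))
    -- φ is a bounded nonnegative C² solution
    (hφC2 : ContDiff ℝ 2 φ)
    (hφnn : ∀ t, 0 ≤ φ t)
    (hφbdd : ∃ M, ∀ t, |φ t| ≤ M)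
    (hφsol : ProfileEq K f g c φ)
    -- φ vanishes at some point
    (t₀ : ℝ) (hφt₀ : φ t₀ = 0) :
    ∀ t, φ t = 0 :=
  vanishing_point_implies_zero_general K f g β c φ hKnn hgnn hβrange hφC2 hφnn hφsol t₀ hφt₀
end
end

section
/- Assume (H0)–(H2), that there exists L ≥ g'(0) with g(s) ≤ L·s for all s ≥ 0, that q₀ := inf_{s≥0} f'(s) > 0 and f(s) ≥ q₀·s for all s ≥ 0. Let c ≥ c⋆, where c⋆ is the minimal c for which χ_L(z,c) := z² − cz − q₀ + L·∫₀^∞∫_ℝ K(s,w)·e^{−z(cs+w)} dw ds has a positive root, and let λ > 0 satisfy χ_L(λ,c) = 0. If φ : ℝ → ℝ₊ is a positive, twice continuously differentiable solution of the profile equation y''(t) − c·y'(t) − f(y(t)) + ∫₀^∞∫_ℝ K(s,w)·g(y(t − cs − w)) dw ds = 0 satisfying φ(t) ≤ δ·e^{λt} for all t ∈ ℝ and some δ > 0, then φ is bounded on ℝ and φ(t) ≤ (sup_{u≥0} g(u)) / q₀ for all t ∈ ℝ. -/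
/-!
Since `K ≥ 0` has mass one and `0 ≤ g ≤ S := sup g`, the profile equation gives
`ψ'' - c ψ' ≥ q₀ ψ` for `ψ = φ - S / q₀`. Because `L ∫∫ K e^{-λ(cs+w)} > 0`, the root `λ` of
`χ_L(·, c)` satisfies `λ² - cλ - q₀ < 0`, so `λ` lies below the positive root `μ` of
`z² - cz - q₀`. If `ψ` were positive somewhere, the decay `φ ≤ δ e^{λt}` at `-∞` and the mean value
theorem give a point where `ψ > 0` and `ψ' > 0`; from there the differential inequality forces
`ψ ≥ B e^{μt}`, which eventually exceeds `δ e^{λt}`.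
-/

open MeasureTheory Filter Set
open scoped ENNReal

noncomputable section

open Real Topology

section KernelIntegrals

variable {α β : Type*} [MeasurableSpace α] [MeasurableSpace β]

lemma integral_integral_mul_le_of_le {μ : Measure α} {ν : Measure β} [SFinite μ] [SFinite ν]
    {K h : α → β → ℝ} {S : ℝ} (hK : Integrable (Function.uncurry K) (μ.prod ν))
    (hK0 : ∀ a b, 0 ≤ K a b) (hh0 : ∀ a b, 0 ≤ h a b) (hhS : ∀ a b, h a b ≤ S) :
    ∫ a, ∫ b, K a b * h a b ∂ν ∂μ ≤ S * ∫ a, ∫ b, K a b ∂ν ∂μ := by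
  rw [← integral_const_mul]
  refine integral_mono_of_nonneg
    (.of_forall fun a => integral_nonneg fun b => mul_nonneg (hK0 a b) (hh0 a b))
    (hK.integral_prod_left.const_mul S) ?_
  filter_upwards [hK.prod_right_ae] with a ha
  rw [← integral_const_mul]
  refine integral_mono_of_nonneg (.of_forall fun b => mul_nonneg (hK0 a b) (hh0 a b))
    (ha.const_mul S) (.of_forall fun b => ?_)
  show K a b * h a b ≤ S * K a b
  rw [mul_comm S]
  exact mul_le_mul_of_nonneg_left (hhS a b) (hK0 a b)

lemma integral_mul_pos_of_integral_pos {μ : Measure α} {k e : α → ℝ} (hk : 0 ≤ k)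
    (he : ∀ x, 0 < e x) (hke : Integrable (fun x => k x * e x) μ)
    (hpos : 0 < ∫ x, k x ∂μ) : 0 < ∫ x, k x * e x ∂μ := by
  have hki : Integrable k μ := by
    by_contra h
    rw [integral_undef h] at hpos
    exact lt_irrefl 0 hpos
  rw [integral_pos_iff_support_of_nonneg hk hki] at hpos
  rw [integral_pos_iff_support_of_nonneg (fun x => mul_nonneg (hk x) (he x).le) hke]
  convert hpos using 2
  ext x
  simp [(he x).ne']

end KernelIntegrals

section ProdUniv

variable {s : Set ℝ} {F : ℝ × ℝ → ℝ}

lemma setIntegral_prod_univ (hF : IntegrableOn F (s ×ˢ univ)) :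
    ∫ z in s ×ˢ univ, F z = ∫ x in s, ∫ y, F (x, y) := by
  rw [Measure.volume_eq_prod, setIntegral_prod F hF, Measure.restrict_univ]

lemma integrable_prod_of_integrableOn_prod_univ (hF : IntegrableOn F (s ×ˢ univ)) :
    Integrable F ((volume.restrict s).prod volume) := by
  have h := (volume : Measure ℝ).prod_restrict (ν := (volume : Measure ℝ)) s univ
  rw [Measure.restrict_univ, ← Measure.volume_eq_prod] at h
  rw [h]
  exact hF

end ProdUniv

lemma exists_root_gt_of_quadratic_neg {a c q : ℝ} (h : a ^ 2 - c * a - q < 0) :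
    ∃ m, a < m ∧ m ^ 2 - c * m - q = 0 := by
  have hD : 0 ≤ c ^ 2 + 4 * q := by nlinarith [sq_nonneg (2 * a - c)]
  have hr := Real.sq_sqrt hD
  have hr0 := Real.sqrt_nonneg (c ^ 2 + 4 * q)
  refine ⟨(c + √(c ^ 2 + 4 * q)) / 2, ?_, by linear_combination hr / 4⟩
  nlinarith

lemma exists_pos_and_deriv_pos {ψ ψ' : ℝ → ℝ} (hψ : ∀ t, HasDerivAt ψ (ψ' t) t) {a b : ℝ}
    (hab : a ≤ b) (ha : ψ a ≤ 0) (hb : 0 < ψ b) : ∃ t, 0 < ψ t ∧ 0 < ψ' t := by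
  have hcont : Continuous ψ := continuous_iff_continuousAt.2 fun t => (hψ t).continuousAt
  set Z := Icc a b ∩ {t | ψ t ≤ 0}
  have hZ : IsCompact Z := isCompact_Icc.inter_right (isClosed_le hcont continuous_const)
  have ht₂ : sSup Z ∈ Z := hZ.sSup_mem ⟨a, ⟨le_rfl, hab⟩, ha⟩
  have hψ₂ : ψ (sSup Z) ≤ 0 := ht₂.2
  have ht₂b : sSup Z < b := ht₂.1.2.lt_of_ne fun h => by rw [h] at hψ₂; linarith
  obtain ⟨t, ht, hslope⟩ :=
    exists_hasDerivAt_eq_slope ψ ψ' ht₂b hcont.continuousOn fun t _ => hψ t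
  refine ⟨t, ?_, ?_⟩
  · by_contra! hle
    exact (le_csSup hZ.bddAbove ⟨⟨ht₂.1.1.trans ht.1.le, ht.2.le⟩, hle⟩).not_gt ht.1
  · rw [hslope]
    exact div_pos (by linarith) (sub_pos.2 ht₂b)

lemma monotoneOn_of_hasDerivAt_nonneg {F F' : ℝ → ℝ} {D : Set ℝ} (hD : Convex ℝ D)
    (hF : ∀ t, HasDerivAt F (F' t) t) (hF' : ∀ t ∈ interior D, 0 ≤ F' t) : MonotoneOn F D :=
  monotoneOn_of_hasDerivWithinAt_nonneg hD (fun t _ => (hF t).continuousAt.continuousWithinAt)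
    (fun t _ => (hF t).hasDerivWithinAt) hF'

section SecondOrderInequality

variable {u u' u'' : ℝ → ℝ} {q c : ℝ}

/-- `e^{-ct} u'` is nondecreasing as long as `u ≥ 0`, so neither `u` nor `u'` can return to `0`. -/
lemma pos_of_mul_le_deriv2_sub_mul_deriv (hu : ∀ t, HasDerivAt u (u' t) t)
    (hu' : ∀ t, HasDerivAt u' (u'' t) t) (hq : 0 ≤ q) (h : ∀ t, q * u t ≤ u'' t - c * u' t)
    {a : ℝ} (ha : 0 < u a) (ha' : 0 < u' a) {t : ℝ} (hat : a ≤ t) : 0 < u t := by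
  have hderiv : ∀ b, a ≤ b → 0 < u' b := by
    by_contra! ⟨b, hab, hb⟩
    set Z := Icc a b ∩ {t | u' t ≤ 0}
    have hcont : Continuous u' := continuous_iff_continuousAt.2 fun t => (hu' t).continuousAt
    have hZ : IsCompact Z := isCompact_Icc.inter_right (isClosed_le hcont continuous_const)
    have ht₃ : sInf Z ∈ Z := hZ.sInf_mem ⟨b, ⟨hab, le_rfl⟩, hb⟩
    have hpos : ∀ s ∈ Ioo a (sInf Z), 0 < u' s := fun s hs => by
      by_contra! hle
      exact (csInf_le hZ.bddBelow ⟨⟨hs.1.le, hs.2.le.trans ht₃.1.2⟩, hle⟩).not_gt hs.2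
    have hu_pos : ∀ s ∈ Icc a (sInf Z), 0 < u s := fun s hs =>
      ha.trans_le (monotoneOn_of_hasDerivAt_nonneg (convex_Icc _ _) hu
        (fun r hr => by rw [interior_Icc] at hr; exact (hpos r hr).le)
        ⟨le_rfl, ht₃.1.1⟩ hs hs.1)
    have hw : ∀ s, HasDerivAt (fun s => exp (-c * s) * u' s)
        (exp (-c * s) * (u'' s - c * u' s)) s := fun s => by
      refine ((((hasDerivAt_id' s).const_mul (-c)).exp).mul (hu' s)).congr_deriv ?_
      ring
    have hmono := monotoneOn_of_hasDerivAt_nonneg (convex_Icc a (sInf Z)) hw fun s hs =>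
      mul_nonneg (exp_pos _).le
        ((mul_nonneg hq (hu_pos s (interior_subset hs)).le).trans (h s))
    have hw_le : exp (-c * a) * u' a ≤ exp (-c * sInf Z) * u' (sInf Z) :=
      hmono ⟨le_rfl, ht₃.1.1⟩ ⟨ht₃.1.1, le_rfl⟩ ht₃.1.1
    linarith [mul_pos (exp_pos (-c * a)) ha',
      mul_nonpos_of_nonneg_of_nonpos (exp_pos (-c * sInf Z)).le ht₃.2]
  exact ha.trans_le (monotoneOn_of_hasDerivAt_nonneg (convex_Ici a) hu
    (fun s hs => (hderiv s (interior_subset hs)).le) self_mem_Ici hat hat)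

/-- Subtracting a small multiple of the solution `e^{m(t - t₁)}` of `y'' - c y' - q y = 0`
preserves the differential inequality and the positivity of `u` and `u'` at `t₁`. -/
lemma exists_mul_exp_le_of_mul_le_deriv2_sub_mul_deriv (hu : ∀ t, HasDerivAt u (u' t) t)
    (hu' : ∀ t, HasDerivAt u' (u'' t) t) (hq : 0 ≤ q) (h : ∀ t, q * u t ≤ u'' t - c * u' t)
    {m t₁ : ℝ} (hm : 0 < m) (hroot : m ^ 2 - c * m - q = 0) (h₁ : 0 < u t₁)
    (h₁' : 0 < u' t₁) : ∃ B > 0, ∀ t, t₁ ≤ t → B * exp (m * (t - t₁)) ≤ u t := by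
  set B := min (u t₁) (u' t₁ / m) / 2 with hBdef
  have hB : 0 < B := by positivity
  have hBu : B < u t₁ := by linarith [min_le_left (u t₁) (u' t₁ / m)]
  have hBu' : B * m < u' t₁ := by
    have : B ≤ u' t₁ / m / 2 := by linarith [min_le_right (u t₁) (u' t₁ / m)]
    calc B * m ≤ u' t₁ / m / 2 * m := by gcongr
      _ < u' t₁ := by field_simp; linarith
  have he : ∀ t, HasDerivAt (fun t => exp (m * (t - t₁))) (m * exp (m * (t - t₁))) t :=
    fun t => by
      convert (((hasDerivAt_id' t).sub_const t₁).const_mul m).exp using 1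
      ring
  refine ⟨B, hB, fun t ht => ?_⟩
  have := pos_of_mul_le_deriv2_sub_mul_deriv (u := fun t => u t - B * exp (m * (t - t₁)))
    (u' := fun t => u' t - B * m * exp (m * (t - t₁)))
    (u'' := fun t => u'' t - B * m ^ 2 * exp (m * (t - t₁))) (c := c)
    (fun t => ((hu t).sub ((he t).const_mul B)).congr_deriv (by ring))
    (fun t => ((hu' t).sub ((he t).const_mul (B * m))).congr_deriv (by ring)) hq
    (fun t => by linear_combination h t + B * exp (m * (t - t₁)) * hroot)
    (by simpa using hBu) (by simpa using hBu') ht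
  linarith

end SecondOrderInequality

lemma exists_ge_mul_exp_lt_mul_exp {B δ l m t₁ : ℝ} (hB : 0 < B) (hlm : l < m) :
    ∃ t, t₁ ≤ t ∧ δ * exp (l * t) < B * exp (m * (t - t₁)) := by
  have hlim : Tendsto (fun t => B * exp (-(m * t₁)) * exp ((m - l) * t)) atTop atTop :=
    Tendsto.const_mul_atTop (by positivity)
      (tendsto_exp_atTop.comp (Tendsto.const_mul_atTop (sub_pos.2 hlm) tendsto_id))
  obtain ⟨t, ht₁, ht⟩ := ((eventually_ge_atTop t₁).and (hlim.eventually_gt_atTop δ)).exists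
  refine ⟨t, ht₁, ?_⟩
  have hsplit :
      B * exp (m * (t - t₁)) = B * exp (-(m * t₁)) * exp ((m - l) * t) * exp (l * t) := by
    rw [show m * (t - t₁) = -(m * t₁) + (m - l) * t + l * t by ring, exp_add, exp_add]
    ring
  rw [hsplit]
  exact mul_lt_mul_of_pos_right ht (exp_pos _)

lemma exists_root_gt_of_chiL_eq_zero {K : ℝ → ℝ → ℝ} {q₀ L lam c : ℝ}
    (hKnn : ∀ s w, 0 ≤ K s w)
    (hKint : IntegrableOn (fun x : ℝ × ℝ => K x.1 x.2) (Ioi 0 ×ˢ univ))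
    (hKnorm : ∫ s in Ioi (0 : ℝ), ∫ w, K s w = 1) (hL : 0 < L)
    (hKexp : IntegrableOn (fun x : ℝ × ℝ => K x.1 x.2 * exp (-lam * (c * x.1 + x.2)))
      (Ioi 0 ×ˢ univ))
    (hroot : chiL K q₀ L lam c = 0) : ∃ m, lam < m ∧ m ^ 2 - c * m - q₀ = 0 := by
  have hI : 0 < ∫ s in Ioi (0 : ℝ), ∫ w, K s w * exp (-lam * (c * s + w)) := by
    rw [← setIntegral_prod_univ hKexp]
    refine integral_mul_pos_of_integral_pos (fun z => hKnn _ _) (fun z => exp_pos _) hKexp ?_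
    rw [setIntegral_prod_univ hKint, hKnorm]
    exact one_pos
  refine exists_root_gt_of_quadratic_neg ?_
  unfold chiL at hroot
  nlinarith [mul_pos hL hI]

lemma ProfileEq.mul_sub_le_deriv2_sub_mul_deriv {K : ℝ → ℝ → ℝ} {f g φ : ℝ → ℝ} {c q₀ S : ℝ}
    (hφ : ProfileEq K f g c φ) (hKnn : ∀ s w, 0 ≤ K s w)
    (hKint : IntegrableOn (fun x : ℝ × ℝ => K x.1 x.2) (Ioi 0 ×ˢ univ))
    (hKnorm : ∫ s in Ioi (0 : ℝ), ∫ w, K s w = 1) (hg0 : ∀ t, 0 ≤ g (φ t))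
    (hgS : ∀ t, g (φ t) ≤ S) (hf : ∀ t, q₀ * φ t ≤ f (φ t)) (t : ℝ) :
    q₀ * φ t - S ≤ deriv (deriv φ) t - c * deriv φ t := by
  have hconv := integral_integral_mul_le_of_le (integrable_prod_of_integrableOn_prod_univ hKint)
    hKnn (h := fun s w => g (φ (t - c * s - w))) (fun s w => hg0 _) (fun s w => hgS _)
  rw [hKnorm, mul_one] at hconv
  linarith [hφ t, hf t]

theorem solution_bounded_general
    (K : ℝ → ℝ → ℝ) (γsharp : ℝ → ℝ≥0∞)
    (f g : ℝ → ℝ) (L q₀ c lam δ : ℝ) (φ : ℝ → ℝ)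
    -- (H0)
    (hKnn : ∀ s w, 0 ≤ K s w)
    (hKint : IntegrableOn (fun x : ℝ × ℝ => K x.1 x.2) (Set.Ioi 0 ×ˢ Set.univ))
    (hKnorm : (∫ s in Set.Ioi (0:ℝ), ∫ w : ℝ, K s w) = 1)
    (hKconv : ∀ c' z : ℝ, 0 ≤ z → ENNReal.ofReal z < γsharp c' →
      IntegrableOn (fun x : ℝ × ℝ => K x.1 x.2 * Real.exp (-z * (c' * x.1 + x.2)))
        (Set.Ioi 0 ×ˢ Set.univ))
    -- (H1)
    (hgpos : ∀ s, 0 < s → 0 < g s)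
    -- (H2)
    (hgbdd : BddAbove (g '' Set.Ici 0))
    -- extra conditions
    (hgL : ∀ s, 0 ≤ s → g s ≤ L * s)
    (hq₀pos : 0 < q₀)
    (hflow : ∀ s, 0 ≤ s → q₀ * s ≤ f s)
    -- λ is a positive root of χ_L(·,c)
    (hlam : 0 < lam) (hlamdom : ENNReal.ofReal lam < γsharp c)
    (hlamroot : chiL K q₀ L lam c = 0)
    -- φ is a positive C² solution dominated by δ e^{λ t}
    (hφC2 : ContDiff ℝ 2 φ)
    (hφpos : ∀ t, 0 < φ t)
    (hφsol : ProfileEq K f g c φ)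
    (hφdom : ∀ t, φ t ≤ δ * Real.exp (lam * t)) :
    (∃ M, ∀ t, |φ t| ≤ M) ∧ ∀ t, φ t ≤ sSup (g '' Set.Ici 0) / q₀ := by
  set S := sSup (g '' Ici 0)
  have hgS : ∀ x, 0 < x → g x ≤ S := fun x hx => le_csSup hgbdd ⟨x, hx.le, rfl⟩
  have hS : 0 < S / q₀ := div_pos ((hgpos 1 one_pos).trans_le (hgS 1 one_pos)) hq₀pos
  have hL : 0 < L := by linarith [hgpos 1 one_pos, hgL 1 zero_le_one]
  obtain ⟨m, hlm, hm⟩ := exists_root_gt_of_chiL_eq_zero hKnn hKint hKnorm hL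
    (hKconv c lam hlam.le hlamdom) hlamroot
  have hφ' : ∀ t, HasDerivAt φ (deriv φ t) t := fun t =>
    ((hφC2.differentiable (by norm_num)) t).hasDerivAt
  have hφ'' : ∀ t, HasDerivAt (deriv φ) (deriv (deriv φ) t) t := fun t =>
    ((hφC2.deriv' (n := 1)).differentiable one_ne_zero t).hasDerivAt
  have hψ : ∀ t, q₀ * (φ t - S / q₀) ≤ deriv (deriv φ) t - c * deriv φ t := fun t => by
    rw [mul_sub, mul_div_cancel₀ _ hq₀pos.ne']
    exact hφsol.mul_sub_le_deriv2_sub_mul_deriv hKnn hKint hKnorm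
      (fun t => (hgpos _ (hφpos t)).le) (fun t => hgS _ (hφpos t)) (fun t => hflow _ (hφpos t).le) t
  have hbound : ∀ t, φ t ≤ S / q₀ := by
    intro t₀
    by_contra! ht₀
    have hdom : Tendsto (fun t => δ * exp (lam * t)) atBot (𝓝 0) := by
      simpa using (tendsto_exp_atBot.comp (Tendsto.const_mul_atBot hlam tendsto_id)).const_mul δ
    obtain ⟨a, ha, ha₀⟩ :=
      ((hdom.eventually (gt_mem_nhds hS)).and (eventually_le_atBot t₀)).exists
    obtain ⟨t₁, h₁, h₁'⟩ := exists_pos_and_deriv_pos (fun t => (hφ' t).sub_const (S / q₀)) ha₀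
      (sub_nonpos.2 ((hφdom a).trans ha.le)) (sub_pos.2 ht₀)
    obtain ⟨B, hB, hBle⟩ := exists_mul_exp_le_of_mul_le_deriv2_sub_mul_deriv
      (fun t => (hφ' t).sub_const (S / q₀)) hφ'' hq₀pos.le hψ (hlam.trans hlm) hm h₁ h₁'
    obtain ⟨t, ht, hlt⟩ := exists_ge_mul_exp_lt_mul_exp (δ := δ) (t₁ := t₁) hB hlm
    linarith [hBle t ht, hφdom t]
  exact ⟨⟨S / q₀, fun t => (abs_of_pos (hφpos t)).trans_le (hbound t)⟩, hbound⟩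

/-- A positive solution of the profile equation dominated by `δ e^{λt}`, where
`χ_L(λ,c) = 0`, is globally bounded by `sup g / inf f'`. -/
theorem solution_bounded
    (K : ℝ → ℝ → ℝ) (γsharp : ℝ → ℝ≥0∞)
    (f f' g : ℝ → ℝ) (g'0 L q₀ cstar c lam δ : ℝ) (φ : ℝ → ℝ)
    -- (H0)
    (hKmeas : Measurable fun x : ℝ × ℝ => K x.1 x.2)
    (hKnn : ∀ s w, 0 ≤ K s w)
    (hKint : IntegrableOn (fun x : ℝ × ℝ => K x.1 x.2) (Set.Ioi 0 ×ˢ Set.univ))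
    (hKnorm : (∫ s in Set.Ioi (0:ℝ), ∫ w : ℝ, K s w) = 1)
    (hγpos : ∀ c', 0 < γsharp c')
    (hKconv : ∀ c' z : ℝ, 0 ≤ z → ENNReal.ofReal z < γsharp c' →
      IntegrableOn (fun x : ℝ × ℝ => K x.1 x.2 * Real.exp (-z * (c' * x.1 + x.2)))
        (Set.Ioi 0 ×ˢ Set.univ))
    (hKdiv : ∀ c' z : ℝ, γsharp c' < ENNReal.ofReal z →
      ¬ IntegrableOn (fun x : ℝ × ℝ => K x.1 x.2 * Real.exp (-z * (c' * x.1 + x.2)))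
        (Set.Ioi 0 ×ˢ Set.univ))
    -- (H1)
    (hgc : ContinuousOn g (Set.Ici 0))
    (hgnn : ∀ s, 0 ≤ s → 0 ≤ g s)
    (hg0 : g 0 = 0)
    (hgpos : ∀ s, 0 < s → 0 < g s)
    (hgd : HasDerivWithinAt g g'0 (Set.Ici 0) 0)
    -- (H2)
    (hfd : ∀ s, 0 ≤ s → HasDerivWithinAt f (f' s) (Set.Ici 0) s)
    (hf'c : ContinuousOn f' (Set.Ici 0))
    (hfnn : ∀ s, 0 ≤ s → 0 ≤ f s)
    (hfmono : StrictMonoOn f (Set.Ici 0))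
    (hf0 : f 0 = 0)
    (hf'0pos : 0 < f' 0) (hf'0lt : f' 0 < g'0)
    (hgbdd : BddAbove (g '' Set.Ici 0))
    (hfinf : ∃ s₀, 0 ≤ s₀ ∧ sSup (g '' Set.Ici 0) < f s₀)
    -- extra conditions
    (hL : g'0 ≤ L)
    (hgL : ∀ s, 0 ≤ s → g s ≤ L * s)
    (hq₀def : q₀ = sInf (f' '' Set.Ici 0))
    (hq₀pos : 0 < q₀)
    (hflow : ∀ s, 0 ≤ s → q₀ * s ≤ f s)
    -- c ≥ c⋆, the minimal speed for which χ_L(·,c) has a positive root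
    (hcstar : IsLeast {c' : ℝ | ∃ z : ℝ, 0 < z ∧ ENNReal.ofReal z < γsharp c' ∧
      chiL K q₀ L z c' = 0} cstar)
    (hc : cstar ≤ c)
    -- λ is a positive root of χ_L(·,c)
    (hlam : 0 < lam) (hlamdom : ENNReal.ofReal lam < γsharp c)
    (hlamroot : chiL K q₀ L lam c = 0)
    -- φ is a positive C² solution dominated by δ e^{λ t}
    (hφC2 : ContDiff ℝ 2 φ)
    (hφpos : ∀ t, 0 < φ t)
    (hφsol : ProfileEq K f g c φ)
    (hδ : 0 < δ)
    (hφdom : ∀ t, φ t ≤ δ * Real.exp (lam * t)) :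
    (∃ M, ∀ t, |φ t| ≤ M) ∧ ∀ t, φ t ≤ sSup (g '' Set.Ici 0) / q₀ :=
  solution_bounded_general K γsharp f g L q₀ c lam δ φ hKnn hKint hKnorm hKconv hgpos hgbdd hgL
    hq₀pos hflow hlam hlamdom hlamroot hφC2 hφpos hφsol hφdom
end
end

section
/- Assume the hypotheses of the previous boundedness lemma: (H0)–(H2), g(s) ≤ L·s for all s ≥ 0 with L ≥ g'(0), q₀ := inf_{s≥0} f'(s) > 0, f(s) ≥ q₀·s for all s ≥ 0, c ≥ c⋆, λ > 0 with χ_L(λ,c) = 0, and φ a positive solution of the profile equation with φ(t) ≤ δ·e^{λt} for all t and some δ > 0. Set β > f'(0) large, ρ := (sup_{u≥0} g(u))/β, θ := (β − q₀)/(β + cλ − λ²) and γ := (β − q₀)/β. Then 0 < γ < 1 and 0 < θ < 1, and for every n ∈ ℕ and every t ∈ ℝ one has φ(t) ≤ δ·e^{λt}·θⁿ + ρ·(1 − γ^{n+1})/(1 − γ). -/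
/-!
From the profile equation, `∫∫ K = 1` and `f(s) ≥ q₀ s` one gets `φ'' - cφ' ≥ q₀ φ - M` with
`M = sup g`. If `φ ≤ A e^{λt} + B`, then `v = φ - θ A e^{λt} - (γ B + ρ)` satisfies
`v'' - cv' - βv ≥ 0` and `v ≤ C e^{λt}`. Since `χ_L(λ, c) = 0` forces `λ² - cλ < q₀ < β`, the
exponent `λ` lies below the positive root of `μ² - cμ - β`, and a Phragmén–Lindelöf maximum
principle gives `v ≤ 0`. Iterating `(A, B) ↦ (θ A, γ B + ρ)` from `(δ, 0)` and summing the
geometric series gives the bound.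
-/

open MeasureTheory Filter Set
open scoped ENNReal

noncomputable section

open Real Topology

lemma hasDerivAt_exp_const_mul (μ t : ℝ) :
    HasDerivAt (fun x => exp (μ * x)) (μ * exp (μ * t)) t := by
  simpa [mul_comm] using ((hasDerivAt_id t).const_mul μ).exp

lemma IsLocalMax.deriv_deriv_nonpos {f : ℝ → ℝ} {x : ℝ} (h : IsLocalMax f x)
    (hc : ContinuousAt f x) : deriv (deriv f) x ≤ 0 := by
  by_contra! hpos
  have hmin := isLocalMin_of_deriv_deriv_pos hpos h.deriv_eq_zero hc
  have hconst : f =ᶠ[𝓝 x] fun _ => f x := by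
    filter_upwards [h, hmin] with y hmax hmin using le_antisymm hmax hmin
  have : deriv (deriv f) x = 0 := by
    rw [hconst.deriv.deriv_eq]; simp
  exact hpos.ne' this

lemma eventually_cocompact_mul_exp_sub_mul_exp_lt {lam μ δ ε a : ℝ} (hlam : 0 < lam)
    (hμ : lam < μ) (hε : 0 < ε) (ha : 0 < a) :
    ∀ᶠ t in cocompact ℝ, δ * exp (lam * t) - ε * exp (μ * t) < a := by
  rw [cocompact_eq_atBot_atTop, eventually_sup]
  constructor
  · have h : Tendsto (fun t => δ * exp (lam * t)) atBot (𝓝 0) := by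
      simpa using (tendsto_exp_atBot.comp (tendsto_id.const_mul_atBot hlam)).const_mul δ
    filter_upwards [h.eventually (gt_mem_nhds ha)] with t ht
    linarith [mul_pos hε (exp_pos (μ * t))]
  · have h : Tendsto (fun t => exp ((μ - lam) * t)) atTop atTop :=
      tendsto_exp_atTop.comp (tendsto_id.const_mul_atTop (sub_pos.2 hμ))
    filter_upwards [h.eventually_ge_atTop (δ / ε)] with t ht
    have hle : δ * exp (lam * t) ≤ ε * exp (μ * t) :=
      calc δ * exp (lam * t) ≤ ε * exp ((μ - lam) * t) * exp (lam * t) := by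
            gcongr; exact (div_le_iff₀' hε).1 ht
        _ = ε * exp (μ * t) := by rw [mul_assoc, ← exp_add]; ring_nf
    linarith

theorem nonpos_of_le_deriv_of_le_exp {v v' v'' : ℝ → ℝ} {c β lam δ : ℝ}
    (hv : ∀ t, HasDerivAt v (v' t) t) (hv' : ∀ t, HasDerivAt v' (v'' t) t)
    (hineq : ∀ t, β * v t + c * v' t ≤ v'' t) (hβ : 0 ≤ β) (hlam : 0 < lam)
    (hroot : lam ^ 2 - c * lam - β < 0) (hbd : ∀ t, v t ≤ δ * exp (lam * t)) (t : ℝ) :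
    v t ≤ 0 := by
  obtain ⟨μ, hlamμ, hμ⟩ : ∃ μ, lam < μ ∧ μ ^ 2 - c * μ - β < 0 := by
    have hcont : Continuous fun μ : ℝ => μ ^ 2 - c * μ - β := by fun_prop
    have : ∀ᶠ μ in 𝓝[>] lam, μ ^ 2 - c * μ - β < 0 :=
      nhdsWithin_le_nhds (hcont.continuousAt.eventually_lt continuousAt_const hroot)
    obtain ⟨μ, hμ, hlt⟩ := (this.and self_mem_nhdsWithin).exists
    exact ⟨μ, hlt, hμ⟩
  -- `v ≤ ε e^{μ t}` for every `ε > 0`: a positive maximum of `v - ε e^{μ t}` would contradict the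
  -- differential inequality, and a maximum exists since `λ < μ`.
  suffices h : ∀ ε > 0, ∀ t, v t ≤ ε * exp (μ * t) by
    refine le_of_forall_pos_le_add fun η hη => ?_
    simpa [(exp_pos _).ne'] using h (η / exp (μ * t)) (by positivity) t
  intro ε hε
  by_contra! ⟨t₀, ht₀⟩
  set w : ℝ → ℝ := fun t => v t - ε * exp (μ * t)
  have hw : ∀ t, HasDerivAt w (v' t - ε * (μ * exp (μ * t))) t := fun t =>
    (hv t).sub ((hasDerivAt_exp_const_mul μ t).const_mul ε)
  have hw' : ∀ t, HasDerivAt (fun t => v' t - ε * (μ * exp (μ * t)))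
      (v'' t - ε * (μ * (μ * exp (μ * t)))) t := fun t =>
    (hv' t).sub (((hasDerivAt_exp_const_mul μ t).const_mul μ).const_mul ε)
  have hwt₀ : 0 < w t₀ := sub_pos.2 ht₀
  obtain ⟨tm, htm⟩ : ∃ tm, ∀ t, w t ≤ w tm := by
    refine (continuous_iff_continuousAt.2 fun t => (hw t).continuousAt).exists_forall_ge' t₀ ?_
    filter_upwards [eventually_cocompact_mul_exp_sub_mul_exp_lt (δ := δ) hlam hlamμ hε hwt₀]
      with t ht
    linarith [hbd t]
  have hmax : IsLocalMax w tm := Eventually.of_forall htm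
  have hd1 : v' tm - ε * (μ * exp (μ * tm)) = 0 := (hw tm).deriv ▸ hmax.deriv_eq_zero
  have hd2 : v'' tm - ε * (μ * (μ * exp (μ * tm))) ≤ 0 := by
    have h := hmax.deriv_deriv_nonpos (hw tm).continuousAt
    rwa [show deriv w = _ from funext fun t => (hw t).deriv, (hw' tm).deriv] at h
  have hwtm : 0 ≤ β * w tm := mul_nonneg hβ (hwt₀.trans_le (htm t₀)).le
  nlinarith [hineq tm, mul_pos (mul_pos hε (exp_pos (μ * tm))) (neg_pos.2 hμ)]

lemma le_mul_pow_add_mul_geom_sum {X : Type*} {φ e : X → ℝ} {δ θ γ ρ : ℝ}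
    (hstep : ∀ A B, 0 ≤ B → (∀ t, φ t ≤ A * e t + B) → ∀ t, φ t ≤ θ * A * e t + (γ * B + ρ))
    (h₀ : ∀ t, φ t ≤ δ * e t) (hγ : 0 ≤ γ) (hρ : 0 ≤ ρ) (n : ℕ) (t : X) :
    φ t ≤ δ * θ ^ n * e t + ρ * ∑ k ∈ Finset.range (n + 1), γ ^ k := by
  induction n generalizing t with
  | zero => simpa using (h₀ t).trans (le_add_of_nonneg_right hρ)
  | succ n ih =>
    have h := hstep _ _ (by positivity) ih t
    rw [geom_sum_succ]
    exact h.trans_eq (by ring)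

lemma integral_mul_le_mul_integral {X : Type*} [MeasurableSpace X] {ρ : Measure X}
    {K u : X → ℝ} {M : ℝ} (hK : Integrable K ρ) (hKnn : ∀ x, 0 ≤ K x)
    (hu : AEStronglyMeasurable u ρ) (huM : ∀ x, ‖u x‖ ≤ M) :
    ∫ x, K x * u x ∂ρ ≤ M * ∫ x, K x ∂ρ := by
  rw [← integral_const_mul]
  refine integral_mono (hK.mul_bdd hu (Eventually.of_forall huM)) (hK.const_mul M) fun x => ?_
  calc K x * u x ≤ K x * M :=
        mul_le_mul_of_nonneg_left ((le_abs_self _).trans (huM x)) (hKnn x)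
    _ = M * K x := mul_comm _ _

lemma integral_mul_pos_of_integral_pos_s7 {X : Type*} [MeasurableSpace X] {ρ : Measure X}
    {K E : X → ℝ} (hKnn : 0 ≤ K) (hE : ∀ x, 0 < E x) (hKE : Integrable (fun x => K x * E x) ρ)
    (hK : 0 < ∫ x, K x ∂ρ) : 0 < ∫ x, K x * E x ∂ρ := by
  have hsupp : Function.support (fun x => K x * E x) = Function.support K := by
    ext x; simp [(hE x).ne']
  rw [integral_pos_iff_support_of_nonneg (fun x => mul_nonneg (hKnn x) (hE x).le) hKE, hsupp]
  exact (integral_pos_iff_support_of_nonneg hKnn (Integrable.of_integral_ne_zero hK.ne')).1 hK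

lemma volume_restrict_Ioi_prod_volume :
    (volume.restrict (Ioi (0 : ℝ))).prod (volume : Measure ℝ) =
      volume.restrict (Ioi 0 ×ˢ univ) := by
  rw [Measure.volume_eq_prod, ← Measure.prod_restrict, Measure.restrict_univ]

lemma setIntegral_Ioi_integral_kernel_mul_le {K : ℝ → ℝ → ℝ} (hKnn : ∀ s w, 0 ≤ K s w)
    (hKint : IntegrableOn (fun x : ℝ × ℝ => K x.1 x.2) (Ioi 0 ×ˢ univ))
    (hKnorm : ∫ s in Ioi (0 : ℝ), ∫ w : ℝ, K s w = 1)
    {u : ℝ → ℝ → ℝ} {M : ℝ}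
    (hu : Continuous fun x : ℝ × ℝ => u x.1 x.2) (huM : ∀ s w, ‖u s w‖ ≤ M) :
    ∫ s in Ioi (0 : ℝ), ∫ w : ℝ, K s w * u s w ≤ M := by
  rw [IntegrableOn, ← volume_restrict_Ioi_prod_volume] at hKint
  have hKu := hKint.mul_bdd hu.aestronglyMeasurable (Eventually.of_forall fun x => huM x.1 x.2)
  rw [← integral_prod _ hKu]
  calc _ ≤ M * ∫ x : ℝ × ℝ, K x.1 x.2 ∂(volume.restrict (Ioi 0)).prod volume :=
        integral_mul_le_mul_integral hKint (fun x => hKnn x.1 x.2) hu.aestronglyMeasurable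
          fun x => huM x.1 x.2
    _ = M := by rw [integral_prod _ hKint, hKnorm, mul_one]

lemma setIntegral_Ioi_integral_kernel_mul_pos {K : ℝ → ℝ → ℝ} (hKnn : ∀ s w, 0 ≤ K s w)
    (hKint : IntegrableOn (fun x : ℝ × ℝ => K x.1 x.2) (Ioi 0 ×ˢ univ))
    (hKnorm : ∫ s in Ioi (0 : ℝ), ∫ w : ℝ, K s w = 1)
    {E : ℝ → ℝ → ℝ} (hE : ∀ s w, 0 < E s w)
    (hKE : IntegrableOn (fun x : ℝ × ℝ => K x.1 x.2 * E x.1 x.2) (Ioi 0 ×ˢ univ)) :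
    0 < ∫ s in Ioi (0 : ℝ), ∫ w : ℝ, K s w * E s w := by
  rw [IntegrableOn, ← volume_restrict_Ioi_prod_volume] at hKint hKE
  rw [← integral_prod _ hKE]
  refine integral_mul_pos_of_integral_pos_s7 (fun x => hKnn x.1 x.2) (fun x => hE x.1 x.2) hKE ?_
  rw [integral_prod _ hKint, hKnorm]
  exact one_pos

lemma ProfileEq.le_deriv_deriv_sub {K : ℝ → ℝ → ℝ} (hKnn : ∀ s w, 0 ≤ K s w)
    (hKint : IntegrableOn (fun x : ℝ × ℝ => K x.1 x.2) (Ioi 0 ×ˢ univ))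
    (hKnorm : ∫ s in Ioi (0 : ℝ), ∫ w : ℝ, K s w = 1)
    {f g φ : ℝ → ℝ} {c q₀ M : ℝ} (hφsol : ProfileEq K f g c φ)
    (hgc : ContinuousOn g (Ici 0)) (hgnn : ∀ s, 0 ≤ s → 0 ≤ g s) (hgM : ∀ s, 0 ≤ s → g s ≤ M)
    (hflow : ∀ s, 0 ≤ s → q₀ * s ≤ f s) (hφc : Continuous φ) (hφnn : ∀ t, 0 ≤ φ t) (t : ℝ) :
    q₀ * φ t - M ≤ deriv (deriv φ) t - c * deriv φ t := by
  have hcont : Continuous fun x : ℝ × ℝ => g (φ (t - c * x.1 - x.2)) :=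
    hgc.comp_continuous (hφc.comp (by fun_prop)) fun x => hφnn _
  have hint := setIntegral_Ioi_integral_kernel_mul_le hKnn hKint hKnorm
    (u := fun s w => g (φ (t - c * s - w))) hcont fun s w => by
      rw [norm_of_nonneg (hgnn _ (hφnn _))]
      exact hgM _ (hφnn _)
  linarith [hφsol t, hflow (φ t) (hφnn t)]

lemma sq_sub_mul_lt_of_chiL_eq_zero {K : ℝ → ℝ → ℝ} {q₀ L z c : ℝ} (hL : 0 < L)
    (hI : 0 < ∫ s in Ioi (0 : ℝ), ∫ w : ℝ, K s w * exp (-z * (c * s + w)))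
    (h : chiL K q₀ L z c = 0) : z ^ 2 - c * z < q₀ := by
  unfold chiL at h
  nlinarith [mul_pos hL hI]

lemma Real.sInf_le_of_mem_of_pos {s : Set ℝ} {x : ℝ} (hx : x ∈ s) (h : 0 < sInf s) :
    sInf s ≤ x := by
  refine csInf_le ?_ hx
  by_contra hs
  rw [Real.sInf_of_not_bddBelow hs] at h
  exact h.false

theorem le_mul_exp_add_of_le_mul_exp_add {φ : ℝ → ℝ} {c β q₀ M lam δ A B : ℝ}
    (hφ1 : Differentiable ℝ φ) (hφ2 : Differentiable ℝ (deriv φ))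
    (hφ : ∀ t, q₀ * φ t - M ≤ deriv (deriv φ) t - c * deriv φ t)
    (hβ : 0 < β) (hqβ : q₀ ≤ β) (hM : 0 ≤ M) (hlam : 0 < lam) (hroot : lam ^ 2 - c * lam < β)
    (hdom : ∀ t, φ t ≤ δ * exp (lam * t)) (hB : 0 ≤ B) (hAB : ∀ t, φ t ≤ A * exp (lam * t) + B)
    (t : ℝ) :
    φ t ≤ (β - q₀) / (β + c * lam - lam ^ 2) * A * exp (lam * t) + ((β - q₀) / β * B + M / β) := by
  set A' := (β - q₀) / (β + c * lam - lam ^ 2) * A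
  set B' := (β - q₀) / β * B + M / β
  have hA' : A' * (β + c * lam - lam ^ 2) = (β - q₀) * A := by
    simp only [A']; field_simp [(by linarith : β + c * lam - lam ^ 2 ≠ 0)]
  have hB' : β * B' = (β - q₀) * B + M := by simp only [B']; field_simp
  have hB'nn : 0 ≤ B' := by
    have := div_nonneg (sub_nonneg.2 hqβ) hβ.le
    positivity
  -- `ψ = A' e^{λt} + B'` solves `ψ'' - cψ' - βψ = -(β - q₀)(A e^{λt} + B) - M`.
  have hv := nonpos_of_le_deriv_of_le_exp (v := fun t => φ t - (A' * exp (lam * t) + B'))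
    (v' := fun t => deriv φ t - A' * (lam * exp (lam * t)))
    (v'' := fun t => deriv (deriv φ) t - A' * (lam * (lam * exp (lam * t))))
    (c := c) (β := β) (δ := δ - A')
    (fun t => (hφ1 t).hasDerivAt.sub
      (((hasDerivAt_exp_const_mul lam t).const_mul A').add_const B'))
    (fun t => (hφ2 t).hasDerivAt.sub
      (((hasDerivAt_exp_const_mul lam t).const_mul lam).const_mul A'))
    (fun t => by
      have hAe : A' * exp (lam * t) * (β + c * lam - lam ^ 2) = (β - q₀) * A * exp (lam * t) := by
        rw [mul_right_comm, hA']
      linarith [hφ t, mul_le_mul_of_nonneg_left (hAB t) (sub_nonneg.2 hqβ)])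
    hβ.le hlam (by linarith) (fun t => by linarith [hdom t]) t
  linarith

theorem iterative_bound_general
    (K : ℝ → ℝ → ℝ) (γsharp : ℝ → ℝ≥0∞)
    (f f' g : ℝ → ℝ) (g'0 L q₀ c lam δ β : ℝ) (φ : ℝ → ℝ)
    -- (H0)
    (hKnn : ∀ s w, 0 ≤ K s w)
    (hKint : IntegrableOn (fun x : ℝ × ℝ => K x.1 x.2) (Set.Ioi 0 ×ˢ Set.univ))
    (hKnorm : (∫ s in Set.Ioi (0:ℝ), ∫ w : ℝ, K s w) = 1)
    (hKconv : ∀ c' z : ℝ, 0 ≤ z → ENNReal.ofReal z < γsharp c' →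
      IntegrableOn (fun x : ℝ × ℝ => K x.1 x.2 * Real.exp (-z * (c' * x.1 + x.2)))
        (Set.Ioi 0 ×ˢ Set.univ))
    -- (H1)
    (hgc : ContinuousOn g (Set.Ici 0))
    (hgnn : ∀ s, 0 ≤ s → 0 ≤ g s)
    -- (H2)
    (hf'0pos : 0 < f' 0) (hf'0lt : f' 0 < g'0)
    (hgbdd : BddAbove (g '' Set.Ici 0))
    -- extra conditions
    (hL : g'0 ≤ L)
    (hq₀def : q₀ = sInf (f' '' Set.Ici 0))
    (hq₀pos : 0 < q₀)
    (hflow : ∀ s, 0 ≤ s → q₀ * s ≤ f s)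
    -- λ is a positive root of χ_L(·,c)
    (hlam : 0 < lam) (hlamdom : ENNReal.ofReal lam < γsharp c)
    (hlamroot : chiL K q₀ L lam c = 0)
    -- φ is a positive C² solution dominated by δ e^{λ t}
    (hφC2 : ContDiff ℝ 2 φ)
    (hφpos : ∀ t, 0 < φ t)
    (hφsol : ProfileEq K f g c φ)
    (hφdom : ∀ t, φ t ≤ δ * Real.exp (lam * t))
    -- β > f'(0) large
    (hβ : f' 0 < β) :
    (0 < (β - q₀) / β ∧ (β - q₀) / β < 1) ∧
    (0 < (β - q₀) / (β + c * lam - lam ^ 2) ∧ (β - q₀) / (β + c * lam - lam ^ 2) < 1) ∧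
    ∀ (n : ℕ) (t : ℝ),
      φ t ≤ δ * Real.exp (lam * t) * ((β - q₀) / (β + c * lam - lam ^ 2)) ^ n +
        (sSup (g '' Set.Ici 0) / β) * (1 - ((β - q₀) / β) ^ (n + 1)) / (1 - (β - q₀) / β) := by
  have hβ0 : 0 < β := hf'0pos.trans hβ
  have hq₀β : q₀ < β := by
    refine lt_of_le_of_lt ?_ hβ
    rw [hq₀def] at hq₀pos ⊢
    exact Real.sInf_le_of_mem_of_pos (mem_image_of_mem f' self_mem_Ici) hq₀pos
  have hroot : lam ^ 2 - c * lam < q₀ :=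
    sq_sub_mul_lt_of_chiL_eq_zero (hf'0pos.trans (hf'0lt.trans_le hL))
      (setIntegral_Ioi_integral_kernel_mul_pos hKnn hKint hKnorm (fun _ _ => exp_pos _)
        (hKconv c lam hlam.le hlamdom)) hlamroot
  set M := sSup (g '' Ici 0)
  have hgM : ∀ s, 0 ≤ s → g s ≤ M := fun s hs => le_csSup hgbdd (mem_image_of_mem g hs)
  have hM : 0 ≤ M := (hgnn 0 le_rfl).trans (hgM 0 le_rfl)
  set γ := (β - q₀) / β
  have hγ1 : γ < 1 := (div_lt_one hβ0).2 (by linarith)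
  refine ⟨⟨div_pos (sub_pos.2 hq₀β) hβ0, hγ1⟩,
    ⟨div_pos (sub_pos.2 hq₀β) (by linarith), (div_lt_one (by linarith)).2 (by linarith)⟩,
    fun n t => ?_⟩
  have hφ := hφsol.le_deriv_deriv_sub hKnn hKint hKnorm hgc hgnn hgM hflow hφC2.continuous
    fun t => (hφpos t).le
  have hφ1 : Differentiable ℝ φ := hφC2.differentiable (by norm_num)
  have hφ2 : Differentiable ℝ (deriv φ) := (hφC2.deriv' (n := 1)).differentiable one_ne_zero
  have hbound := le_mul_pow_add_mul_geom_sum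
    (fun A B hB hAB => le_mul_exp_add_of_le_mul_exp_add hφ1 hφ2 hφ hβ0 hq₀β.le hM hlam
      (by linarith) hφdom hB hAB)
    hφdom (div_nonneg (sub_nonneg.2 hq₀β.le) hβ0.le) (div_nonneg hM hβ0.le) n t
  have hgeom : ∑ k ∈ Finset.range (n + 1), γ ^ k = (1 - γ ^ (n + 1)) / (1 - γ) := by
    rw [geom_sum_eq hγ1.ne, ← neg_div_neg_eq, neg_sub, neg_sub]
  rw [hgeom] at hbound
  exact hbound.trans_eq (by ring)

/-- The iterative bound `φ(t) ≤ δ e^{λt} θⁿ + ρ (1 - γ^{n+1})/(1 - γ)` for a positive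
solution of the profile equation dominated by `δ e^{λt}`. -/
theorem iterative_bound
    (K : ℝ → ℝ → ℝ) (γsharp : ℝ → ℝ≥0∞)
    (f f' g : ℝ → ℝ) (g'0 L q₀ cstar c lam δ β : ℝ) (φ : ℝ → ℝ)
    -- (H0)
    (hKmeas : Measurable fun x : ℝ × ℝ => K x.1 x.2)
    (hKnn : ∀ s w, 0 ≤ K s w)
    (hKint : IntegrableOn (fun x : ℝ × ℝ => K x.1 x.2) (Set.Ioi 0 ×ˢ Set.univ))
    (hKnorm : (∫ s in Set.Ioi (0:ℝ), ∫ w : ℝ, K s w) = 1)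
    (hγpos : ∀ c', 0 < γsharp c')
    (hKconv : ∀ c' z : ℝ, 0 ≤ z → ENNReal.ofReal z < γsharp c' →
      IntegrableOn (fun x : ℝ × ℝ => K x.1 x.2 * Real.exp (-z * (c' * x.1 + x.2)))
        (Set.Ioi 0 ×ˢ Set.univ))
    (hKdiv : ∀ c' z : ℝ, γsharp c' < ENNReal.ofReal z →
      ¬ IntegrableOn (fun x : ℝ × ℝ => K x.1 x.2 * Real.exp (-z * (c' * x.1 + x.2)))
        (Set.Ioi 0 ×ˢ Set.univ))
    -- (H1)
    (hgc : ContinuousOn g (Set.Ici 0))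
    (hgnn : ∀ s, 0 ≤ s → 0 ≤ g s)
    (hg0 : g 0 = 0)
    (hgpos : ∀ s, 0 < s → 0 < g s)
    (hgd : HasDerivWithinAt g g'0 (Set.Ici 0) 0)
    -- (H2)
    (hfd : ∀ s, 0 ≤ s → HasDerivWithinAt f (f' s) (Set.Ici 0) s)
    (hf'c : ContinuousOn f' (Set.Ici 0))
    (hfnn : ∀ s, 0 ≤ s → 0 ≤ f s)
    (hfmono : StrictMonoOn f (Set.Ici 0))
    (hf0 : f 0 = 0)
    (hf'0pos : 0 < f' 0) (hf'0lt : f' 0 < g'0)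
    (hgbdd : BddAbove (g '' Set.Ici 0))
    (hfinf : ∃ s₀, 0 ≤ s₀ ∧ sSup (g '' Set.Ici 0) < f s₀)
    -- extra conditions
    (hL : g'0 ≤ L)
    (hgL : ∀ s, 0 ≤ s → g s ≤ L * s)
    (hq₀def : q₀ = sInf (f' '' Set.Ici 0))
    (hq₀pos : 0 < q₀)
    (hflow : ∀ s, 0 ≤ s → q₀ * s ≤ f s)
    -- c ≥ c⋆, the minimal speed for which χ_L(·,c) has a positive root
    (hcstar : IsLeast {c' : ℝ | ∃ z : ℝ, 0 < z ∧ ENNReal.ofReal z < γsharp c' ∧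
      chiL K q₀ L z c' = 0} cstar)
    (hc : cstar ≤ c)
    -- λ is a positive root of χ_L(·,c)
    (hlam : 0 < lam) (hlamdom : ENNReal.ofReal lam < γsharp c)
    (hlamroot : chiL K q₀ L lam c = 0)
    -- φ is a positive C² solution dominated by δ e^{λ t}
    (hφC2 : ContDiff ℝ 2 φ)
    (hφpos : ∀ t, 0 < φ t)
    (hφsol : ProfileEq K f g c φ)
    (hδ : 0 < δ)
    (hφdom : ∀ t, φ t ≤ δ * Real.exp (lam * t))
    -- β > f'(0) large
    (hβ : f' 0 < β) :
    (0 < (β - q₀) / β ∧ (β - q₀) / β < 1) ∧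
    (0 < (β - q₀) / (β + c * lam - lam ^ 2) ∧ (β - q₀) / (β + c * lam - lam ^ 2) < 1) ∧
    ∀ (n : ℕ) (t : ℝ),
      φ t ≤ δ * Real.exp (lam * t) * ((β - q₀) / (β + c * lam - lam ^ 2)) ^ n +
        (sSup (g '' Set.Ici 0) / β) * (1 - ((β - q₀) / β) ^ (n + 1)) / (1 - (β - q₀) / β) :=
  iterative_bound_general K γsharp f f' g g'0 L q₀ c lam δ β φ hKnn hKint hKnorm hKconv hgc hgnn
    hf'0pos hf'0lt hgbdd hL hq₀def hq₀pos hflow hlam hlamdom hlamroot hφC2 hφpos hφsol hφdom hβ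
end
end

section
/- Let α > 0, c ≠ 0, let P be a Borel probability measure on ℝ₊, g ∈ C(ℝ₊, ℝ₊) bounded with g(0) = 0, and define K₂(w) := ∫_{[0,w]} e^{−α(w−r)} dP(r) for w ≥ 0. Let φ : ℝ → ℝ₊ be a bounded continuous function and define ψ(t) := ∫₀^∞ g(φ(t − cw))·K₂(w) dw. Then: ψ is well defined and |ψ(t)| ≤ (sup_{u≥0} g(u))/α for all t ∈ ℝ; ψ is continuously differentiable and satisfies c·ψ'(t) + α·ψ(t) = ∫₀^∞ g(φ(t − cs)) dP(s) for all t ∈ ℝ; and if lim_{t→−∞} φ(t) = 0 then lim_{t→−∞} ψ(t) = 0. -/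
open MeasureTheory Filter Set

noncomputable section

/-- `K₂(w) = ∫_{[0,w]} e^{-α(w-r)} dP(r)`. -/
def K2kernel (P : Measure ℝ) (α : ℝ) (w : ℝ) : ℝ :=
  ∫ r in Set.Icc (0:ℝ) w, Real.exp (-α * (w - r)) ∂P

/-- `ψ(t) = ∫₀^∞ g(φ(t - cw)) K₂(w) dw`. -/
def psiFun (P : Measure ℝ) (α c : ℝ) (g φ : ℝ → ℝ) (t : ℝ) : ℝ :=
  ∫ w in Set.Ioi (0:ℝ), g (φ (t - c * w)) * K2kernel P α w


open scoped ENNReal Topology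

/-!
Fubini's theorem applied to the definition of `K₂`, followed by the shift `w = v + r`, gives
`ψ(t) = ∫₀^∞ e^{-αv} Φ(t - cv) dv` with `Φ(u) = ∫ g(φ(u - cs)) dP(s)`, a continuous function with
values in `[0, sup g]`. For `c > 0` the substitution `u = t - cv` turns this into
`ψ(t) = c⁻¹ e^{-αt/c} ∫_{-∞}^t e^{αu/c} Φ(u) du`, so the fundamental theorem of calculus yields
`c ψ' + α ψ = Φ`; the case `c < 0` follows by reflecting `t ↦ -t`. The bound comes from
`∫₀^∞ e^{-αv} dv = 1/α` and the limit at `-∞` from dominated convergence, applied twice.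
-/

theorem setLIntegral_Ici_eq_comp_add_right (f : ℝ → ℝ≥0∞) (r : ℝ) :
    ∫⁻ w in Ici r, f w = ∫⁻ v in Ici 0, f (v + r) := by
  rw [← lintegral_indicator measurableSet_Ici, ← lintegral_indicator measurableSet_Ici,
    ← lintegral_add_right_eq_self _ r]
  congr 1 with v
  simp only [indicator, mem_Ici, le_add_iff_nonneg_left]

theorem lintegral_mul_lintegral_Icc_sub {P : Measure ℝ} [SFinite P] (hP : P (Iio 0) = 0)
    {h k : ℝ → ℝ≥0∞} (hh : Measurable h) (hk : Measurable k) :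
    ∫⁻ w in Ioi 0, h w * ∫⁻ r in Icc 0 w, k (w - r) ∂P =
      ∫⁻ v in Ioi 0, k v * ∫⁻ r, h (v + r) ∂P := by
  set T : Set (ℝ × ℝ) := {p | 0 ≤ p.2 ∧ p.2 ≤ p.1}
  set F : ℝ × ℝ → ℝ≥0∞ := T.indicator fun p => h p.1 * k (p.1 - p.2)
  have hF : Measurable F :=
    ((hh.comp measurable_fst).mul (hk.comp (by fun_prop))).indicator
      ((measurableSet_le measurable_const measurable_snd).inter
        (measurableSet_le measurable_snd measurable_fst))
  have hP_nonneg : ∀ᵐ r ∂P, 0 ≤ r :=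
    (measure_eq_zero_iff_ae_notMem.1 hP).mono fun r hr => not_lt.1 hr
  have shift (r : ℝ) (hr : 0 ≤ r) :
      ∫⁻ w in Ici 0, F (w, r) = ∫⁻ v in Ici 0, k v * h (v + r) := by
    calc ∫⁻ w in Ici 0, F (w, r)
        = ∫⁻ w in Ici 0, (Ici r).indicator (fun w => h w * k (w - r)) w :=
          setLIntegral_congr_fun measurableSet_Ici fun w _ => by
            by_cases hrw : r ≤ w <;> simp [F, T, indicator, hrw, hr]
      _ = ∫⁻ w in Ici r, h w * k (w - r) := by
          rw [setLIntegral_indicator measurableSet_Ici, inter_eq_left.2 (Ici_subset_Ici.2 hr)]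
      _ = ∫⁻ v in Ici 0, k v * h (v + r) := by
          simp only [setLIntegral_Ici_eq_comp_add_right _ r, add_sub_cancel_right, mul_comm]
  calc ∫⁻ w in Ioi 0, h w * ∫⁻ r in Icc 0 w, k (w - r) ∂P
      = ∫⁻ w in Ici 0, ∫⁻ r, F (w, r) ∂P := by
        rw [setLIntegral_congr Ioi_ae_eq_Ici]
        refine lintegral_congr fun w => ?_
        rw [← lintegral_indicator measurableSet_Icc, ← lintegral_const_mul]
        · congr 1 with r
          by_cases hr : r ∈ Icc 0 w <;> simp_all [F, T, indicator]
        · exact (hk.comp (by fun_prop)).indicator measurableSet_Icc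
    _ = ∫⁻ r, (∫⁻ w in Ici 0, F (w, r)) ∂P :=
        lintegral_lintegral_swap (f := fun w r => F (w, r)) hF.aemeasurable
    _ = ∫⁻ r, (∫⁻ v in Ici 0, k v * h (v + r)) ∂P :=
        lintegral_congr_ae (hP_nonneg.mono shift)
    _ = ∫⁻ v in Ici 0, ∫⁻ r, k v * h (v + r) ∂P :=
        lintegral_lintegral_swap
          ((hk.comp measurable_snd).mul (hh.comp (measurable_snd.add measurable_fst))).aemeasurable
    _ = ∫⁻ v in Ioi 0, k v * ∫⁻ r, h (v + r) ∂P := by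
        rw [setLIntegral_congr Ioi_ae_eq_Ici]
        exact lintegral_congr fun v => lintegral_const_mul _ (hh.comp (measurable_const_add v))

theorem integrable_and_integral_eq_of_lintegral_ofReal_eq {X Y : Type*} [MeasurableSpace X]
    [MeasurableSpace Y] {μ : Measure X} {ν : Measure Y} {f : X → ℝ} {g : Y → ℝ}
    (hf : 0 ≤ᵐ[μ] f) (hfm : AEStronglyMeasurable f μ) (hg : 0 ≤ᵐ[ν] g) (hgi : Integrable g ν)
    (h : ∫⁻ x, ENNReal.ofReal (f x) ∂μ = ∫⁻ y, ENNReal.ofReal (g y) ∂ν) :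
    Integrable f μ ∧ ∫ x, f x ∂μ = ∫ y, g y ∂ν := by
  refine ⟨⟨hfm, (hasFiniteIntegral_iff_ofReal hf).2 ?_⟩, ?_⟩
  · exact h ▸ (hasFiniteIntegral_iff_ofReal hg).1 hgi.2
  · rw [integral_eq_lintegral_of_nonneg_ae hf hfm, integral_eq_lintegral_of_nonneg_ae hg hgi.1, h]

theorem hasDerivAt_setIntegral_Iic {W : ℝ → ℝ} (hW : Continuous W)
    (hint : ∀ a, IntegrableOn W (Iic a)) (t : ℝ) :
    HasDerivAt (fun τ => ∫ u in Iic τ, W u) (W t) t := by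
  have hsplit : (fun τ => ∫ u in Iic τ, W u) =
      fun τ => (∫ u in Iic 0, W u) + ∫ u in (0:ℝ)..τ, W u := by
    funext τ
    rw [← intervalIntegral.integral_Iic_sub_Iic (hint 0) (hint τ)]
    ring
  rw [hsplit]
  exact (intervalIntegral.integral_hasDerivAt_right (hW.intervalIntegrable 0 t)
    hW.stronglyMeasurable.stronglyMeasurableAtFilter hW.continuousAt).const_add _

theorem image_sub_mul_Ioi_zero {c : ℝ} (hc : 0 < c) (t : ℝ) :
    (fun v => t - c * v) '' Ioi 0 = Iio t := by
  ext u
  constructor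
  · rintro ⟨v, hv, rfl⟩
    exact sub_lt_self t (mul_pos hc hv)
  · intro hu
    exact ⟨(t - u) / c, div_pos (sub_pos.2 hu) hc, by field_simp; ring⟩

section ExpConv

variable {α c M : ℝ} {f : ℝ → ℝ}

def expConv (α c : ℝ) (f : ℝ → ℝ) (t : ℝ) : ℝ :=
  ∫ v in Ioi (0:ℝ), Real.exp (-α * v) * f (t - c * v)

theorem norm_exp_mul_le_mul_exp (hM : ∀ x, |f x| ≤ M) (a x : ℝ) :
    ‖Real.exp a * f x‖ ≤ M * Real.exp a := by
  rw [norm_mul, Real.norm_of_nonneg (Real.exp_pos a).le, Real.norm_eq_abs, mul_comm]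
  exact mul_le_mul_of_nonneg_right (hM x) (Real.exp_pos a).le

theorem integrableOn_exp_mul_comp_sub (hα : 0 < α) (hf : Continuous f) (hM : ∀ x, |f x| ≤ M)
    (c t : ℝ) : IntegrableOn (fun v => Real.exp (-α * v) * f (t - c * v)) (Ioi 0) :=
  ((exp_neg_integrableOn_Ioi 0 hα).const_mul M).mono'
    ((by fun_prop : Continuous fun v => Real.exp (-α * v) * f (t - c * v)).aestronglyMeasurable)
    (ae_of_all _ fun _ => norm_exp_mul_le_mul_exp hM _ _)

theorem abs_expConv_le (hα : 0 < α) (hM : ∀ x, |f x| ≤ M) (t : ℝ) :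
    |expConv α c f t| ≤ M / α :=
  calc |expConv α c f t|
      ≤ ∫ v in Ioi (0:ℝ), M * Real.exp (-α * v) :=
        norm_integral_le_of_norm_le ((exp_neg_integrableOn_Ioi 0 hα).const_mul M)
          (ae_of_all _ fun _ => norm_exp_mul_le_mul_exp hM _ _)
    _ = M / α := by
        rw [integral_const_mul, integral_exp_mul_Ioi (neg_lt_zero.2 hα)]
        field_simp
        simp

theorem expConv_eq_comp_neg (α c : ℝ) (f : ℝ → ℝ) (t : ℝ) :
    expConv α c f t = expConv α (-c) (fun x => f (-x)) (-t) := by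
  unfold expConv
  congr 1 with v
  ring_nf

theorem expConv_eq_of_pos (hc : 0 < c) (t : ℝ) :
    expConv α c f t =
      c⁻¹ * (Real.exp (-(α / c) * t) * ∫ u in Iic t, Real.exp (α / c * u) * f u) := by
  have hderiv (v : ℝ) : HasDerivAt (fun v => t - c * v) (-c) v := by
    simpa using ((hasDerivAt_id v).const_mul c).const_sub t
  rw [integral_Iic_eq_integral_Iio, ← image_sub_mul_Ioi_zero hc t,
    integral_image_eq_integral_abs_deriv_smul measurableSet_Ioi
      (fun v _ => (hderiv v).hasDerivWithinAt) (fun v _ w _ h => by simpa [hc.ne'] using h),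
    ← integral_const_mul, ← integral_const_mul, expConv]
  refine integral_congr_ae (ae_of_all _ fun v => ?_)
  have hexp : Real.exp (-(α / c) * t) * Real.exp (α / c * (t - c * v)) = Real.exp (-α * v) := by
    rw [← Real.exp_add]
    congr 1
    field_simp
    ring
  simp only [abs_neg, abs_of_pos hc, smul_eq_mul, ← hexp]
  field_simp

theorem hasDerivAt_expConv_of_pos (hα : 0 < α) (hc : 0 < c) (hf : Continuous f)
    (hM : ∀ x, |f x| ≤ M) (t : ℝ) :
    HasDerivAt (expConv α c f) ((f t - α * expConv α c f t) / c) t := by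
  set W : ℝ → ℝ := fun u => Real.exp (α / c * u) * f u
  have hW : Continuous W := by fun_prop
  have hWint (a : ℝ) : IntegrableOn W (Iic a) :=
    ((integrableOn_exp_mul_Iic (div_pos hα hc) a).const_mul M).mono' hW.aestronglyMeasurable
      (ae_of_all _ fun _ => norm_exp_mul_le_mul_exp hM _ _)
  have hexp : HasDerivAt (fun τ => Real.exp (-(α / c) * τ))
      (Real.exp (-(α / c) * t) * -(α / c)) t := by
    simpa using ((hasDerivAt_id t).const_mul (-(α / c))).exp
  have hprod := (hexp.mul (hasDerivAt_setIntegral_Iic hW hWint t)).const_mul c⁻¹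
  rw [show expConv α c f = fun τ => c⁻¹ * (Real.exp (-(α / c) * τ) * ∫ u in Iic τ, W u) from
    funext (expConv_eq_of_pos hc)]
  refine hprod.congr_deriv ?_
  have hinv : Real.exp (-(α / c) * t) * Real.exp (α / c * t) = 1 := by
    rw [← Real.exp_add]
    simp
  simp only [W]
  linear_combination (c⁻¹ * f t) * hinv

theorem hasDerivAt_expConv (hα : 0 < α) (hc : c ≠ 0) (hf : Continuous f)
    (hM : ∀ x, |f x| ≤ M) (t : ℝ) :
    HasDerivAt (expConv α c f) ((f t - α * expConv α c f t) / c) t := by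
  rcases hc.lt_or_gt with hneg | hpos
  · have h := (hasDerivAt_expConv_of_pos hα (neg_pos.2 hneg) (hf.comp continuous_neg)
      (fun x => hM (-x)) (-t)).comp t (hasDerivAt_neg t)
    rw [show expConv α c f = expConv α (-c) (fun x => f (-x)) ∘ Neg.neg from
      funext (expConv_eq_comp_neg α c f)]
    refine h.congr_deriv ?_
    simp only [Function.comp_def, neg_neg, ← expConv_eq_comp_neg]
    field_simp
  · exact hasDerivAt_expConv_of_pos hα hpos hf hM t

theorem continuous_expConv (hα : 0 < α) (hc : c ≠ 0) (hf : Continuous f)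
    (hM : ∀ x, |f x| ≤ M) : Continuous (expConv α c f) :=
  continuous_iff_continuousAt.2 fun t => (hasDerivAt_expConv hα hc hf hM t).continuousAt

theorem tendsto_expConv_atBot (hα : 0 < α) (hf : Continuous f) (hM : ∀ x, |f x| ≤ M)
    (hlim : Tendsto f atBot (𝓝 0)) : Tendsto (expConv α c f) atBot (𝓝 0) := by
  have h := tendsto_integral_filter_of_dominated_convergence (μ := volume.restrict (Ioi (0:ℝ)))
    (F := fun t v => Real.exp (-α * v) * f (t - c * v)) (l := atBot) (f := fun _ => 0)
    (fun v => M * Real.exp (-α * v))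
    (Eventually.of_forall fun t =>
      (integrableOn_exp_mul_comp_sub hα hf hM c t).aestronglyMeasurable)
    (Eventually.of_forall fun _ => ae_of_all _ fun _ => norm_exp_mul_le_mul_exp hM _ _)
    ((exp_neg_integrableOn_Ioi 0 hα).const_mul M)
    (ae_of_all _ fun v => by
      simpa [sub_eq_add_neg] using
        (hlim.comp (tendsto_atBot_add_const_right atBot (-(c * v)) tendsto_id)).const_mul
          (Real.exp (-α * v)))
  rw [integral_zero] at h
  exact h

end ExpConv

section DelayedMean

variable {P : Measure ℝ} {M : ℝ} {G : ℝ → ℝ}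

def delayedMean (P : Measure ℝ) (c : ℝ) (G : ℝ → ℝ) (u : ℝ) : ℝ :=
  ∫ s, G (u - c * s) ∂P

theorem integrable_comp_sub_mul [IsFiniteMeasure P] (hG : Continuous G) (hM : ∀ x, |G x| ≤ M)
    (c u : ℝ) : Integrable (fun s => G (u - c * s)) P :=
  .of_bound (hG.comp (by fun_prop)).aestronglyMeasurable M (ae_of_all _ fun _ => hM _)

theorem ofReal_delayedMean [IsFiniteMeasure P] (hG : Continuous G) (hG0 : ∀ x, 0 ≤ G x)
    (hM : ∀ x, |G x| ≤ M) (c u : ℝ) :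
    ENNReal.ofReal (delayedMean P c G u) = ∫⁻ s, ENNReal.ofReal (G (u - c * s)) ∂P :=
  ofReal_integral_eq_lintegral_ofReal (integrable_comp_sub_mul hG hM c u)
    (ae_of_all _ fun _ => hG0 _)

theorem abs_delayedMean_le [IsProbabilityMeasure P] (hM : ∀ x, |G x| ≤ M) (c u : ℝ) :
    |delayedMean P c G u| ≤ M := by
  simpa [delayedMean] using norm_integral_le_of_norm_le_const (μ := P)
    (f := fun s => G (u - c * s)) (ae_of_all _ fun s => hM (u - c * s))

theorem continuous_delayedMean [IsFiniteMeasure P] (hG : Continuous G) (hM : ∀ x, |G x| ≤ M)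
    (c : ℝ) : Continuous (delayedMean P c G) :=
  continuous_of_dominated (fun u => (integrable_comp_sub_mul hG hM c u).aestronglyMeasurable)
    (fun _ => ae_of_all _ fun _ => hM _) (integrable_const M) (ae_of_all _ fun _ => by fun_prop)

theorem tendsto_delayedMean_atBot [IsFiniteMeasure P] (hG : Continuous G) (hM : ∀ x, |G x| ≤ M)
    (hlim : Tendsto G atBot (𝓝 0)) (c : ℝ) : Tendsto (delayedMean P c G) atBot (𝓝 0) := by
  have h := tendsto_integral_filter_of_dominated_convergence (μ := P)
    (F := fun u s => G (u - c * s)) (l := atBot) (f := fun _ => 0) (fun _ => M)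
    (Eventually.of_forall fun u => (integrable_comp_sub_mul hG hM c u).aestronglyMeasurable)
    (Eventually.of_forall fun _ => ae_of_all _ fun _ => hM _) (integrable_const M)
    (ae_of_all _ fun s => by
      simpa [sub_eq_add_neg, Function.comp_def] using
        hlim.comp (tendsto_atBot_add_const_right atBot (-(c * s)) tendsto_id))
  rw [integral_zero] at h
  exact h

end DelayedMean

section K2kernel

variable {P : Measure ℝ} {α c M : ℝ} {G : ℝ → ℝ}

theorem ofReal_K2kernel [IsFiniteMeasure P] (α w : ℝ) :
    ENNReal.ofReal (K2kernel P α w) =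
      ∫⁻ r in Icc 0 w, ENNReal.ofReal (Real.exp (-α * (w - r))) ∂P :=
  ofReal_integral_eq_lintegral_ofReal
    ((by fun_prop : Continuous fun r => Real.exp (-α * (w - r))).integrableOn_Icc)
    (ae_of_all _ fun _ => (Real.exp_pos _).le)

theorem stronglyMeasurable_K2kernel [SFinite P] (α : ℝ) :
    StronglyMeasurable (K2kernel P α) := by
  set T : Set (ℝ × ℝ) := {p | p.2 ∈ Icc 0 p.1}
  have hT : MeasurableSet T :=
    (measurableSet_le measurable_const measurable_snd).inter
      (measurableSet_le measurable_snd measurable_fst)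
  have hK : K2kernel P α =
      fun w => ∫ r, T.indicator (fun p => Real.exp (-α * (p.1 - p.2))) (w, r) ∂P := by
    funext w
    rw [K2kernel, ← integral_indicator measurableSet_Icc]
    rfl
  rw [hK]
  exact StronglyMeasurable.integral_prod_right
    (f := fun w r => T.indicator (fun p => Real.exp (-α * (p.1 - p.2))) (w, r))
    ((by fun_prop : Continuous fun p : ℝ × ℝ => Real.exp (-α * (p.1 - p.2))).stronglyMeasurable
      |>.indicator hT)

theorem integrableOn_and_integral_mul_K2kernel_eq [IsProbabilityMeasure P] (hP : P (Iio 0) = 0)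
    (hα : 0 < α) (hG : Continuous G) (hG0 : ∀ x, 0 ≤ G x) (hM : ∀ x, |G x| ≤ M) (t : ℝ) :
    IntegrableOn (fun w => G (t - c * w) * K2kernel P α w) (Ioi 0) ∧
      ∫ w in Ioi 0, G (t - c * w) * K2kernel P α w = expConv α c (delayedMean P c G) t := by
  -- Tonelli in `ℝ≥0∞` needs no integrability; finiteness of the right side then yields it.
  have hlint : ∫⁻ w in Ioi 0, ENNReal.ofReal (G (t - c * w) * K2kernel P α w) =
      ∫⁻ v in Ioi 0, ENNReal.ofReal (Real.exp (-α * v) * delayedMean P c G (t - c * v)) := by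
    simp_rw [ENNReal.ofReal_mul (hG0 _), ofReal_K2kernel, ENNReal.ofReal_mul (Real.exp_pos _).le,
      ofReal_delayedMean hG hG0 hM]
    refine (lintegral_mul_lintegral_Icc_sub hP (h := fun w => ENNReal.ofReal (G (t - c * w)))
      (k := fun v => ENNReal.ofReal (Real.exp (-α * v))) (by fun_prop) (by fun_prop)).trans ?_
    simp_rw [mul_add, sub_sub]
  exact integrable_and_integral_eq_of_lintegral_ofReal_eq
    (ae_of_all _ fun _ => mul_nonneg (hG0 _) (integral_nonneg fun _ => (Real.exp_pos _).le))
    ((hG.comp (by fun_prop)).aestronglyMeasurable.mul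
      (stronglyMeasurable_K2kernel α).aestronglyMeasurable)
    (ae_of_all _ fun _ => mul_nonneg (Real.exp_pos _).le (integral_nonneg fun _ => hG0 _))
    (integrableOn_exp_mul_comp_sub hα (continuous_delayedMean hG hM c) (abs_delayedMean_le hM c)
      c t)
    hlint

end K2kernel

theorem epidemic_second_component_general
    (P : Measure ℝ) [IsProbabilityMeasure P] (α c : ℝ) (g φ : ℝ → ℝ)
    (hα : 0 < α) (hc : c ≠ 0)
    -- P is a probability measure on ℝ₊
    (hP : P (Set.Iio 0) = 0)
    -- g continuous, nonnegative, bounded, g(0) = 0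
    (hgc : ContinuousOn g (Set.Ici 0))
    (hgnn : ∀ s, 0 ≤ s → 0 ≤ g s)
    (hg0 : g 0 = 0)
    (hgbdd : BddAbove (g '' Set.Ici 0))
    -- φ bounded continuous nonnegative
    (hφc : Continuous φ)
    (hφnn : ∀ t, 0 ≤ φ t) :
    -- ψ is well defined and bounded by (sup g)/α
    (∀ t : ℝ, IntegrableOn (fun w => g (φ (t - c * w)) * K2kernel P α w) (Set.Ioi 0)) ∧
    (∀ t : ℝ, |psiFun P α c g φ t| ≤ sSup (g '' Set.Ici 0) / α) ∧
    -- ψ ∈ C¹ and solves c ψ' + α ψ = ∫₀^∞ g(φ(t - cs)) dP(s)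
    (∃ ψ' : ℝ → ℝ, Continuous ψ' ∧
      (∀ t : ℝ, HasDerivAt (psiFun P α c g φ) (ψ' t) t) ∧
      (∀ t : ℝ, c * ψ' t + α * psiFun P α c g φ t = ∫ s, g (φ (t - c * s)) ∂P)) ∧
    -- ψ vanishes at -∞ whenever φ does
    (Tendsto φ atBot (nhds 0) → Tendsto (psiFun P α c g φ) atBot (nhds 0)) := by
  set G : ℝ → ℝ := fun x => g (φ x)
  have hG : Continuous G := hgc.comp_continuous hφc hφnn
  have hG0 (x : ℝ) : 0 ≤ G x := hgnn _ (hφnn x)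
  have hGM (x : ℝ) : |G x| ≤ sSup (g '' Ici 0) :=
    (abs_of_nonneg (hG0 x)).trans_le (le_csSup hgbdd ⟨φ x, hφnn x, rfl⟩)
  set Φ := delayedMean P c G
  have hΦ : Continuous Φ := continuous_delayedMean hG hGM c
  have hΦM : ∀ u, |Φ u| ≤ sSup (g '' Ici 0) := abs_delayedMean_le hGM c
  have hrep (t : ℝ) := integrableOn_and_integral_mul_K2kernel_eq (c := c) hP hα hG hG0 hGM t
  have hψ : psiFun P α c g φ = expConv α c Φ := funext fun t => (hrep t).2
  refine ⟨fun t => (hrep t).1, hψ ▸ abs_expConv_le hα hΦM,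
    ⟨fun t => (Φ t - α * expConv α c Φ t) / c, ?_, hψ ▸ hasDerivAt_expConv hα hc hΦ hΦM,
      fun t => ?_⟩,
    fun hφ0 => hψ ▸ tendsto_expConv_atBot hα hΦ hΦM (tendsto_delayedMean_atBot hG hGM ?_ c)⟩
  · exact (hΦ.sub (continuous_const.mul (continuous_expConv hα hc hΦ hΦM))).div_const c
  · rw [hψ, mul_div_cancel₀ _ hc, sub_add_cancel]
    rfl
  · have hgφ := (hgc 0 self_mem_Ici).tendsto.comp
      (tendsto_nhdsWithin_iff.2 ⟨hφ0, Eventually.of_forall hφnn⟩)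
    rwa [hg0] at hgφ

/-- Recovery of the second component of the epidemic wave profile system. -/
theorem epidemic_second_component
    (P : Measure ℝ) [IsProbabilityMeasure P] (α c : ℝ) (g φ : ℝ → ℝ)
    (hα : 0 < α) (hc : c ≠ 0)
    -- P is a probability measure on ℝ₊
    (hP : P (Set.Iio 0) = 0)
    -- g continuous, nonnegative, bounded, g(0) = 0
    (hgc : ContinuousOn g (Set.Ici 0))
    (hgnn : ∀ s, 0 ≤ s → 0 ≤ g s)
    (hg0 : g 0 = 0)
    (hgbdd : BddAbove (g '' Set.Ici 0))
    -- φ bounded continuous nonnegative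
    (hφc : Continuous φ)
    (hφnn : ∀ t, 0 ≤ φ t)
    (hφbdd : ∃ M, ∀ t, |φ t| ≤ M) :
    -- ψ is well defined and bounded by (sup g)/α
    (∀ t : ℝ, IntegrableOn (fun w => g (φ (t - c * w)) * K2kernel P α w) (Set.Ioi 0)) ∧
    (∀ t : ℝ, |psiFun P α c g φ t| ≤ sSup (g '' Set.Ici 0) / α) ∧
    -- ψ ∈ C¹ and solves c ψ' + α ψ = ∫₀^∞ g(φ(t - cs)) dP(s)
    (∃ ψ' : ℝ → ℝ, Continuous ψ' ∧
      (∀ t : ℝ, HasDerivAt (psiFun P α c g φ) (ψ' t) t) ∧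
      (∀ t : ℝ, c * ψ' t + α * psiFun P α c g φ t = ∫ s, g (φ (t - c * s)) ∂P)) ∧
    -- ψ vanishes at -∞ whenever φ does
    (Tendsto φ atBot (nhds 0) → Tendsto (psiFun P α c g φ) atBot (nhds 0)) :=
  epidemic_second_component_general P α c g φ hα hc hP hgc hgnn hg0 hgbdd hφc hφnn
end
end
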